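/- arXiv:1604.01936 — 10 statements merged into one kernel-verified Lean document; each statement's English description precedes it below -/
import Mathlib

section
/- Let k be an algebraically closed field of characteristic p > 0 and q a power of p. For any matrix A in GL_{n+1}(k), there exists T in GL_{n+1}(k) such that ᵗT · A · T^(q) = I_{n+1}, where T^(q) denotes the matrix obtained from T by raising each entry to the q-th power. -/
/-!
Write `B(x, y) = xᵀ A y^(q)`. The vectors `w` with `Aᵀ w = A^(q) w^(q²)` satisfy
`B(w, y) = B(y, w)^q` for all `y`, and they span the whole space: this is Lang's theorem
`M C^(q²) = C` for `M = (Aᵀ)⁻¹ A^(q)`, proved by induction from a fixed vector of the semilinear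
map `x ↦ M x^(q²)`, itself found by solving a one-variable polynomial equation along the first
linear relation between its iterates. On such vectors `B` behaves like a hermitian form over
`𝔽_{q²}`, so by polarization with a scalar in `𝔽_{q²} \ 𝔽_q` one of them has `B(w, w) ≠ 0`,
since otherwise `B` would vanish on a basis. Rescaling `w` gives `v` with `B(v, v) = 1` whose left
and right orthogonals coincide; it splits off, and induction on the dimension finishes.
-/

open Matrix Polynomial Finset

namespace FermatNormalForm

section Polynomials

variable {k : Type*} [Field k] [IsAlgClosed k]

theorem exists_pow_add_eq_self {N : ℕ} (hN : 2 ≤ N) (s : k) : ∃ t : k, t ^ N + s = t := by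
  have hXN : (X ^ N - X : k[X]).degree = N := by
    rw [degree_sub_eq_left_of_degree_lt] <;> simp only [degree_X_pow, degree_X]
    exact_mod_cast (by omega : 1 < N)
  have hdeg : (X ^ N - X + C s : k[X]).degree ≠ 0 := by
    rw [degree_add_C] <;> rw [hXN] <;> norm_cast <;> omega
  obtain ⟨t, ht⟩ := IsAlgClosed.exists_root _ hdeg
  exact ⟨t, by simpa [sub_add_eq_add_sub, sub_eq_zero] using ht⟩

theorem exists_ne_zero_eval_eq_self {Q : k[X]} (hQ : Q ≠ 0) (hX : X ^ 2 ∣ Q) :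
    ∃ t ≠ 0, Q.eval t = t := by
  obtain ⟨R, rfl⟩ := hX
  have hR : (R * X).degree = ((R.natDegree + 1 : ℕ) : WithBot ℕ) := by
    rw [degree_mul_X, degree_eq_natDegree (right_ne_zero_of_mul hQ)]; rfl
  have hdeg : (R * X - 1 : k[X]).degree ≠ 0 := by
    rw [degree_sub_eq_left_of_degree_lt] <;> rw [hR]
    · exact_mod_cast R.natDegree.succ_ne_zero
    · rw [degree_one]; exact_mod_cast R.natDegree.succ_pos
  obtain ⟨t, ht⟩ := IsAlgClosed.exists_root _ hdeg
  have htR : R.eval t * t = 1 := by simpa [sub_eq_zero] using ht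
  refine ⟨t, fun h => by simp [h] at htR, ?_⟩
  simp only [eval_mul, eval_pow, eval_X]
  linear_combination t * htR

end Polynomials

section FixedVector

variable {k : Type*} [Field k]

/-- If `W s = ∑ i < s, a i • W i` for the iterates `W i = f^[i] w` of an `x ↦ x ^ N`-semilinear
map `f`, then `∑ i < s, (fixedPointPoly N a (i + 1)).eval t • W i` is fixed by `f` whenever
`(fixedPointPoly N a s).eval t = t`. -/
noncomputable def fixedPointPoly (N : ℕ) (a : ℕ → k) : ℕ → k[X]
  | 0 => 0
  | i + 1 => fixedPointPoly N a i ^ N + C (a i) * X ^ N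

theorem X_pow_dvd_fixedPointPoly (N : ℕ) (a : ℕ → k) (i : ℕ) :
    X ^ N ∣ fixedPointPoly N a i := by
  induction i with
  | zero => exact dvd_zero _
  | succ i ih =>
    refine dvd_add ?_ (dvd_mul_left _ _)
    rcases N.eq_zero_or_pos with rfl | hN
    · simp
    · exact dvd_pow ih hN.ne'

theorem fixedPointPoly_succ_ne_zero {N : ℕ} (hN : 2 ≤ N) {a : ℕ → k} {i : ℕ}
    (h : fixedPointPoly N a i ≠ 0 ∨ a i ≠ 0) : fixedPointPoly N a (i + 1) ≠ 0 := by
  intro h0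
  have hcoeff : (fixedPointPoly N a i ^ N).coeff N = 0 := by
    obtain ⟨R, hR⟩ := pow_dvd_pow_of_dvd (X_pow_dvd_fixedPointPoly N a i) N
    rw [hR, ← pow_mul, coeff_X_pow_mul', if_neg (by nlinarith)]
  have ha : a i = 0 := by
    simpa [fixedPointPoly, hcoeff] using congrArg (coeff · N) h0
  simp only [fixedPointPoly, ha, map_zero, zero_mul, add_zero] at h0
  exact h.elim (fun h' => h' (pow_eq_zero_iff (by omega) |>.mp h0)) (· ha)

theorem fixedPointPoly_ne_zero {N : ℕ} (hN : 2 ≤ N) {a : ℕ → k} {i s : ℕ} (hi : a i ≠ 0)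
    (his : i < s) : fixedPointPoly N a s ≠ 0 := by
  induction s, his using Nat.le_induction with
  | base => exact fixedPointPoly_succ_ne_zero hN (Or.inr hi)
  | succ s _ ih => exact fixedPointPoly_succ_ne_zero hN (Or.inl ih)

theorem exists_linearIndepOn_range_and_mem_span {V : Type*} [AddCommGroup V] [Module k V]
    [FiniteDimensional k V] (W : ℕ → V) :
    ∃ s, LinearIndepOn k W (range s : Set ℕ) ∧
      W s ∈ Submodule.span k (W '' (range s : Set ℕ)) := by
  classical
  have hfail : ∃ s, ¬ LinearIndepOn k W (range s : Set ℕ) :=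
    ⟨Module.finrank k V + 1, fun h => by simpa using h.fintype_card_le_finrank⟩
  obtain ⟨s, hs⟩ : ∃ s, Nat.find hfail = s + 1 :=
    Nat.exists_eq_succ_of_ne_zero fun h => Nat.find_spec hfail (by rw [h]; simp)
  have hdep := Nat.find_spec hfail
  rw [hs, range_add_one, coe_insert, linearIndepOn_insert (by simp)] at hdep
  have hindep : LinearIndepOn k W (range s : Set ℕ) := not_not.mp (Nat.find_min hfail (by omega))
  exact ⟨s, hindep, not_not.mp fun h => hdep ⟨hindep, h⟩⟩

theorem exists_ne_zero_apply_eq_self [IsAlgClosed k] {N : ℕ} (hN : 2 ≤ N) {σ : k →+* k}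
    (hσ : ∀ x, σ x = x ^ N) {V : Type*} [AddCommGroup V] [Module k V] [FiniteDimensional k V]
    [Nontrivial V] (f : V →ₛₗ[σ] V) (hf : Function.Injective f) : ∃ v ≠ 0, f v = v := by
  obtain ⟨w, hw⟩ := exists_ne (0 : V)
  set W : ℕ → V := fun i => f^[i] w
  have hW : ∀ i, f (W i) = W (i + 1) := fun i => (Function.iterate_succ_apply' f i w).symm
  obtain ⟨s, hli, hspan⟩ := exists_linearIndepOn_range_and_mem_span (k := k) W
  obtain ⟨a, ha⟩ := (Submodule.mem_span_image_finset_iff_exists_fun' k).mp hspan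
  obtain ⟨i, hi, hai⟩ : ∃ i < s, a i ≠ 0 := by
    by_contra! h
    refine hw (hf.iterate s ((Function.iterate_fixed (map_zero f) s).symm ▸ ?_))
    change W s = 0
    rw [← ha]
    exact sum_eq_zero fun i hi => by rw [h i (mem_range.mp hi), zero_smul]
  obtain ⟨t, ht0, ht⟩ := exists_ne_zero_eval_eq_self (fixedPointPoly_ne_zero hN hai hi)
    ((pow_dvd_pow X hN).trans (X_pow_dvd_fixedPointPoly N a s))
  set c : ℕ → k := fun i => (fixedPointPoly N a i).eval t
  replace ht : c s = t := ht
  have hc : ∀ i, c (i + 1) = c i ^ N + a i * t ^ N := fun i => by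
    simp [c, fixedPointPoly]
  refine ⟨∑ i ∈ range s, c (i + 1) • W i, fun h => ht0 ?_, ?_⟩
  · have := linearIndepOn_finset_iff.mp hli (fun i => c (i + 1)) h (s - 1)
      (mem_range.mpr (by omega))
    rwa [Nat.sub_add_cancel (by omega), ht] at this
  calc f (∑ i ∈ range s, c (i + 1) • W i) = ∑ i ∈ range s, c (i + 1) ^ N • W (i + 1) := by
        simp [map_sum, hσ, hW]
    _ = ∑ i ∈ range (s + 1), c i ^ N • W i := by
        rw [sum_range_succ']
        simp [c, fixedPointPoly, zero_pow (by omega : N ≠ 0)]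
    _ = ∑ i ∈ range s, c i ^ N • W i + t ^ N • W s := by rw [sum_range_succ, ht]
    _ = ∑ i ∈ range s, c (i + 1) • W i := by
        rw [← ha, smul_sum, ← sum_add_distrib]
        refine sum_congr rfl fun i _ => ?_
        rw [hc, add_smul, smul_smul, mul_comm]

end FixedVector

section UpperBlock

variable {R : Type*} {m : ℕ}

/-- The block matrix `[[x, r], [0, D]]`. -/
def upperBlock [Zero R] (x : R) (r : Fin m → R) (D : Matrix (Fin m) (Fin m) R) :
    Matrix (Fin (m + 1)) (Fin (m + 1)) R :=
  of (Fin.cons (Fin.cons x r) fun i => Fin.cons 0 (D i))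

section Zero

variable [Zero R] (x : R) (r : Fin m → R) (D : Matrix (Fin m) (Fin m) R)

@[simp] theorem upperBlock_zero_zero : upperBlock x r D 0 0 = x := rfl

@[simp] theorem upperBlock_zero_succ (j : Fin m) : upperBlock x r D 0 j.succ = r j := rfl

@[simp] theorem upperBlock_succ_zero (i : Fin m) : upperBlock x r D i.succ 0 = 0 := rfl

@[simp] theorem upperBlock_succ_succ (i j : Fin m) : upperBlock x r D i.succ j.succ = D i j := rfl

@[simp] theorem submatrix_succ_succ_upperBlock :
    (upperBlock x r D).submatrix Fin.succ Fin.succ = D := rfl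

theorem eq_upperBlock {M : Matrix (Fin (m + 1)) (Fin (m + 1)) R}
    (h : ∀ i : Fin m, M i.succ 0 = 0) :
    M = upperBlock (M 0 0) (fun j => M 0 j.succ) (M.submatrix Fin.succ Fin.succ) := by
  ext i j
  cases i using Fin.cases <;> cases j using Fin.cases <;> simp [h]

theorem upperBlock_transpose (D : Matrix (Fin m) (Fin m) R) :
    (upperBlock x 0 D)ᵀ = upperBlock x 0 Dᵀ := by
  ext i j
  cases i using Fin.cases <;> cases j using Fin.cases <;> simp

theorem upperBlock_map {S : Type*} [Zero S] (f : R → S) (hf : f 0 = 0) :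
    (upperBlock x r D).map f = upperBlock (f x) (f ∘ r) (D.map f) := by
  ext i j
  cases i using Fin.cases <;> cases j using Fin.cases <;> simp [hf]

end Zero

theorem upperBlock_mul [Semiring R] (x y : R) (r s : Fin m → R) (D E : Matrix (Fin m) (Fin m) R) :
    upperBlock x r D * upperBlock y s E = upperBlock (x * y) (x • s + r ᵥ* E) (D * E) := by
  ext i j
  cases i using Fin.cases <;> cases j using Fin.cases <;>
    simp [mul_apply, Fin.sum_univ_succ, vecMul, dotProduct]

theorem upperBlock_one [Semiring R] : upperBlock (1 : R) 0 (1 : Matrix (Fin m) (Fin m) R) = 1 := by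
  ext i j
  cases i using Fin.cases <;> cases j using Fin.cases <;>
    simp [one_apply, eq_comm (a := (0 : Fin (m + 1)))]

theorem det_upperBlock [CommRing R] (x : R) (r : Fin m → R) (D : Matrix (Fin m) (Fin m) R) :
    (upperBlock x r D).det = x * D.det := by
  rw [det_succ_column_zero, Fin.sum_univ_succ]
  simp

end UpperBlock

theorem exists_isUnit_det_col_zero_eq {K : Type*} [Field K] {m : ℕ} {v : Fin (m + 1) → K}
    (hv : v ≠ 0) : ∃ P : Matrix (Fin (m + 1)) (Fin (m + 1)) K, IsUnit P.det ∧ P.col 0 = v := by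
  obtain ⟨j, hj⟩ := Function.ne_iff.mp hv
  set w := v ∘ Equiv.swap 0 j
  refine ⟨(upperBlock (w 0) (Fin.tail w) 1)ᵀ.submatrix (Equiv.swap 0 j) id, ?_, ?_⟩
  · rw [det_permute, det_transpose, det_upperBlock, det_one, mul_one]
    exact ((Units.isUnit _).map (Int.castRingHom K)).mul (isUnit_iff_ne_zero.mpr hj)
  · ext i
    change Fin.cons (w 0) (Fin.tail w) (Equiv.swap 0 j i) = v i
    rw [Fin.cons_self_tail]
    simp [w]

theorem isUnit_det_map {R S n : Type*} [CommRing R] [CommRing S] [Fintype n] [DecidableEq n]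
    (f : R →+* S) {M : Matrix n n R} (hM : IsUnit M.det) : IsUnit (M.map f).det := by
  rw [← RingHom.mapMatrix_apply, ← RingHom.map_det]
  exact hM.map f

section Lang

variable {k : Type*} [Field k] [IsAlgClosed k]

theorem exists_mul_map_eq_mul_upperBlock {N : ℕ} (hN : 2 ≤ N) {σ : k →+* k}
    (hσ : ∀ x, σ x = x ^ N) {m : ℕ} (M : Matrix (Fin (m + 1)) (Fin (m + 1)) k)
    (hM : IsUnit M.det) : ∃ (P : Matrix (Fin (m + 1)) (Fin (m + 1)) k) (r : Fin m → k)
      (D : Matrix (Fin m) (Fin m) k), IsUnit P.det ∧ M * P.map σ = P * upperBlock 1 r D := by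
  let f : (Fin (m + 1) → k) →ₛₗ[σ] (Fin (m + 1) → k) :=
    { toFun := fun x => M *ᵥ (σ ∘ x)
      map_add' := fun x y => by rw [← mulVec_add]; congr 1; ext; simp
      map_smul' := fun c x => by rw [← mulVec_smul]; congr 1; ext; simp }
  have hf : Function.Injective f := fun x y hxy =>
    funext fun i => σ.injective (congrFun (mulVec_injective_iff_isUnit.mpr
      ((isUnit_iff_isUnit_det M).mpr hM) hxy) i)
  obtain ⟨v, hv0, hv⟩ := exists_ne_zero_apply_eq_self hN hσ f hf
  obtain ⟨P, hP, hPv⟩ := exists_isUnit_det_col_zero_eq hv0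
  set M' := P⁻¹ * M * P.map σ
  have hM'col : M' *ᵥ Pi.single 0 1 = Pi.single 0 1 := by
    have hPσ : P.map σ *ᵥ Pi.single 0 1 = σ ∘ v := by
      rw [mulVec_single_one, ← hPv]; rfl
    rw [← mulVec_mulVec, ← mulVec_mulVec, hPσ]
    change P⁻¹ *ᵥ f v = _
    rw [hv, ← hPv, ← mulVec_single_one, mulVec_mulVec, nonsing_inv_mul P hP, one_mulVec]
  have h : ∀ i, M' i 0 = (Pi.single 0 1 : Fin (m + 1) → k) i := fun i => by
    rw [← hM'col, mulVec_single_one]; rfl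
  have hM' := eq_upperBlock (M := M') fun i =>
    (h i.succ).trans (Pi.single_eq_of_ne i.succ_ne_zero _)
  rw [(h 0).trans (Pi.single_eq_same _ _)] at hM'
  refine ⟨P, fun j => M' 0 j.succ, M'.submatrix Fin.succ Fin.succ, hP, ?_⟩
  calc M * P.map σ = P * M' := by simp only [M', ← mul_assoc, mul_nonsing_inv P hP, one_mul]
    _ = _ := congrArg (P * ·) hM'

-- Lang's theorem for `GL_m` and the Frobenius-type endomorphism `σ`.
theorem exists_isUnit_det_mul_map_eq_self {N : ℕ} (hN : 2 ≤ N) {σ : k →+* k}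
    (hσ : ∀ x, σ x = x ^ N) {m : ℕ} (M : Matrix (Fin m) (Fin m) k) (hM : IsUnit M.det) :
    ∃ C : Matrix (Fin m) (Fin m) k, IsUnit C.det ∧ M * C.map σ = C := by
  induction m with
  | zero => exact ⟨1, by simp, Subsingleton.elim _ _⟩
  | succ m ih =>
    obtain ⟨P, r, D, hP, hMP⟩ := exists_mul_map_eq_mul_upperBlock hN hσ M hM
    have hD : IsUnit D.det := by
      have := hM.mul (isUnit_det_map σ hP)
      rw [← det_mul, hMP, det_mul, det_upperBlock, one_mul] at this
      exact isUnit_of_mul_isUnit_right this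
    obtain ⟨C, hC, hDC⟩ := ih D hD
    choose c hc using fun j => exists_pow_add_eq_self hN ((r ᵥ* C.map σ) j)
    refine ⟨P * upperBlock 1 c C, ?_, ?_⟩
    · rw [det_mul, det_upperBlock, one_mul]
      exact hP.mul hC
    · rw [Matrix.map_mul, ← mul_assoc, hMP, mul_assoc, upperBlock_map _ _ _ _ (map_zero σ),
        upperBlock_mul, hDC, map_one, one_mul, one_smul]
      congr 2
      ext j
      simp [hσ, hc]

end Lang

section Form

variable {k : Type*} [Field k] {n : Type*} [Fintype n] (τ : k →+* k) (A : Matrix n n k)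

def sesqForm : (n → k) →ₗ[k] (n → k) →ₛₗ[τ] k :=
  LinearMap.mk₂'ₛₗ (RingHom.id k) τ (fun x y => x ⬝ᵥ A *ᵥ (τ ∘ y))
    (fun _ _ _ => add_dotProduct _ _ _) (fun _ _ _ => smul_dotProduct _ _ _)
    (fun x y z => by
      rw [← dotProduct_add, ← mulVec_add]; congr 2; ext; simp)
    (fun c x y => by
      rw [← dotProduct_smul, ← mulVec_smul]; congr 2; ext; simp)

theorem sesqForm_apply (x y : n → k) : sesqForm τ A x y = x ⬝ᵥ A *ᵥ (τ ∘ y) := rfl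

theorem transpose_mul_mul_map_apply (U V : Matrix n n k) (i j : n) :
    (Uᵀ * A * V.map τ) i j = sesqForm τ A (U.col i) (V.col j) := by
  rw [sesqForm_apply, dotProduct_mulVec, mul_apply']
  rfl

def IsHermitianVector (w : n → k) : Prop :=
  ∀ y, τ (sesqForm τ A y w) = sesqForm τ A w y

variable {τ A}

theorem IsHermitianVector.add {w₁ w₂ : n → k} (h₁ : IsHermitianVector τ A w₁)
    (h₂ : IsHermitianVector τ A w₂) : IsHermitianVector τ A (w₁ + w₂) := fun y => by
  simp [h₁ y, h₂ y]

theorem IsHermitianVector.smul {w : n → k} (hw : IsHermitianVector τ A w) {c : k}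
    (hc : τ (τ c) = c) : IsHermitianVector τ A (c • w) := fun y => by
  simp [hw y, hc]

theorem isHermitianVector_col_of_transpose_mul_eq [DecidableEq n] {C : Matrix n n k}
    (hC : Aᵀ * C = A.map τ * C.map (τ.comp τ)) (j : n) : IsHermitianVector τ A (C.col j) := by
  have hcol : Aᵀ *ᵥ C.col j = A.map τ *ᵥ (C.map (τ.comp τ)).col j := by
    simp only [← mulVec_single_one, mulVec_mulVec, hC]
  intro y
  have hτA : τ ∘ (A *ᵥ (τ ∘ C.col j)) = A.map τ *ᵥ (C.map (τ.comp τ)).col j :=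
    funext (RingHom.map_mulVec τ A _)
  rw [sesqForm_apply, sesqForm_apply, RingHom.map_dotProduct, hτA, ← hcol, dotProduct_mulVec,
    vecMul_transpose, dotProduct_comm]

theorem sesqForm_eq_zero_of_forall_isotropic {c : k} (hc : τ (τ c) = c) (hc' : τ c ≠ c)
    (hiso : ∀ w, IsHermitianVector τ A w → sesqForm τ A w w = 0) {w₁ w₂ : n → k}
    (h₁ : IsHermitianVector τ A w₁) (h₂ : IsHermitianVector τ A w₂) :
    sesqForm τ A w₁ w₂ = 0 := by
  have hanti : ∀ u, IsHermitianVector τ A u →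
      sesqForm τ A u w₂ + τ (sesqForm τ A u w₂) = 0 := by
    intro u hu
    have := hiso _ (hu.add h₂)
    simp only [map_add, LinearMap.add_apply, hiso u hu, hiso w₂ h₂, ← h₂ u] at this
    linear_combination this
  have h := hanti (c • w₁) (h₁.smul hc)
  simp only [map_smul, LinearMap.smul_apply, smul_eq_mul, map_mul] at h
  have hb : (c - τ c) * sesqForm τ A w₁ w₂ = 0 := by
    linear_combination h - τ c * hanti w₁ h₁
  exact (mul_eq_zero.mp hb).resolve_left (sub_ne_zero.mpr hc'.symm)

theorem exists_isHermitianVector_sesqForm_self_ne_zero_of_cols [DecidableEq n] [Nonempty n]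
    (hA : IsUnit A.det) {C : Matrix n n k} (hC : IsUnit C.det)
    (hcol : ∀ j, IsHermitianVector τ A (C.col j)) {c : k} (hc : τ (τ c) = c) (hc' : τ c ≠ c) :
    ∃ w, IsHermitianVector τ A w ∧ sesqForm τ A w w ≠ 0 := by
  by_contra! hiso
  have h0 : Cᵀ * A * C.map τ = 0 := by
    ext i j
    rw [transpose_mul_mul_map_apply]
    exact sesqForm_eq_zero_of_forall_isotropic hc hc' hiso (hcol i) (hcol j)
  have hdet := congrArg det h0
  rw [det_mul, det_mul, det_transpose, det_zero] at hdet
  exact ((hC.mul hA).mul (isUnit_det_map τ hC)).ne_zero hdet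

theorem exists_transpose_mul_mul_map_eq_upperBlock {m : ℕ}
    {A : Matrix (Fin (m + 1)) (Fin (m + 1)) k} {v : Fin (m + 1) → k} (hv : sesqForm τ A v v = 1)
    (horth : ∀ y, sesqForm τ A y v = 0 → sesqForm τ A v y = 0) :
    ∃ (T : Matrix (Fin (m + 1)) (Fin (m + 1)) k) (A' : Matrix (Fin m) (Fin m) k),
      IsUnit T.det ∧ Tᵀ * A * T.map τ = upperBlock 1 0 A' := by
  obtain ⟨E, hE, hEv⟩ := exists_isUnit_det_col_zero_eq (v := v) (by rintro rfl; simp at hv)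
  set T := E * upperBlock 1 (fun j => -sesqForm τ A (E.col j.succ) v) 1
  have hT0 : T.col 0 = v := by
    ext i
    simp [T, ← hEv, mul_apply, Fin.sum_univ_succ]
  have hTsucc : ∀ j : Fin m,
      T.col j.succ = E.col j.succ - sesqForm τ A (E.col j.succ) v • v := by
    intro j
    ext i
    simp only [T, ← hEv, col_apply, mul_apply, Fin.sum_univ_succ, upperBlock_zero_succ,
      upperBlock_succ_succ, one_apply, mul_ite, mul_one, mul_zero, sum_ite_eq', mem_univ,
      if_true, Pi.sub_apply, Pi.smul_apply, smul_eq_mul]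
    ring
  have hTv : ∀ j : Fin m, sesqForm τ A (T.col j.succ) v = 0 := by
    intro j
    simp [hTsucc, hv]
  refine ⟨T, (Tᵀ * A * T.map τ).submatrix Fin.succ Fin.succ, ?_,
    (eq_upperBlock fun i => ?_).trans ?_⟩
  · rwa [det_mul, det_upperBlock, det_one, one_mul, mul_one]
  · rw [transpose_mul_mul_map_apply, hT0, hTv]
  · simp only [transpose_mul_mul_map_apply, hT0, hv]
    congr
    ext j
    rw [horth _ (hTv j)]
    rfl

end Form

section NormalForm

variable {k : Type*} [Field k] [IsAlgClosed k] {q : ℕ} {τ : k →+* k}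

theorem exists_map_map_eq_self_and_map_ne (hq : 2 ≤ q) (hτ : ∀ x, τ x = x ^ q) :
    ∃ c : k, τ (τ c) = c ∧ τ c ≠ c := by
  obtain ⟨μ, hμ⟩ := IsAlgClosed.exists_pow_nat_eq (-1 : k) (n := q - 1) (by omega)
  have hμ0 : μ ≠ 0 := by
    rintro rfl
    rw [zero_pow (by omega)] at hμ
    exact one_ne_zero (neg_eq_zero.mp hμ.symm)
  have hτμ : τ μ = -μ := by
    rw [hτ, ← Nat.sub_add_cancel (by omega : 1 ≤ q), pow_succ, hμ, neg_one_mul]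
  obtain ⟨c, hc⟩ := exists_pow_add_eq_self hq (-μ)
  have hτc : τ c = c + μ := by rw [hτ]; linear_combination hc
  exact ⟨c, by rw [hτc, map_add, hτc, hτμ]; ring, by simpa [hτc] using hμ0⟩

theorem exists_isHermitianVector_sesqForm_self_ne_zero (hq : 2 ≤ q) (hτ : ∀ x, τ x = x ^ q)
    {m : ℕ} (A : Matrix (Fin (m + 1)) (Fin (m + 1)) k) (hA : IsUnit A.det) :
    ∃ w, IsHermitianVector τ A w ∧ sesqForm τ A w w ≠ 0 := by
  have hAT : IsUnit Aᵀ.det := by rwa [det_transpose]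
  obtain ⟨C, hC, hAC⟩ := exists_isUnit_det_mul_map_eq_self (N := q * q) (σ := τ.comp τ)
    (by nlinarith) (fun x => by simp [hτ, pow_mul])
    ((Aᵀ)⁻¹ * A.map τ)
    (by rw [det_mul]; exact (isUnit_nonsing_inv_det _ hAT).mul (isUnit_det_map τ hA))
  have hcol : Aᵀ * C = A.map τ * C.map (τ.comp τ) := by
    conv_lhs => rw [← hAC]
    rw [← mul_assoc, ← mul_assoc, mul_nonsing_inv _ hAT, one_mul]
  obtain ⟨c, hc, hc'⟩ := exists_map_map_eq_self_and_map_ne hq hτ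
  exact exists_isHermitianVector_sesqForm_self_ne_zero_of_cols hA hC
    (isHermitianVector_col_of_transpose_mul_eq hcol) hc hc'

theorem exists_sesqForm_self_eq_one (hq : 2 ≤ q) (hτ : ∀ x, τ x = x ^ q) {n : Type*}
    [Fintype n] {A : Matrix n n k} {w : n → k} (hw : IsHermitianVector τ A w)
    (hww : sesqForm τ A w w ≠ 0) :
    ∃ v, sesqForm τ A v v = 1 ∧ ∀ y, sesqForm τ A y v = 0 → sesqForm τ A v y = 0 := by
  obtain ⟨c, hc⟩ :=
    IsAlgClosed.exists_pow_nat_eq (sesqForm τ A w w)⁻¹ (n := q + 1) (by omega)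
  have hc0 : c ≠ 0 := by
    rintro rfl
    rw [zero_pow (by omega)] at hc
    exact inv_ne_zero hww hc.symm
  refine ⟨c • w, ?_, fun y hy => ?_⟩
  · simp only [map_smul, LinearMap.smul_apply, map_smulₛₗ, smul_eq_mul, hτ]
    linear_combination sesqForm τ A w w * hc + mul_inv_cancel₀ hww
  · simp only [map_smul, LinearMap.smul_apply, map_smulₛₗ, smul_eq_mul] at hy ⊢
    rw [← hw y, (mul_eq_zero.mp hy).resolve_left ((map_ne_zero τ).mpr hc0), map_zero, mul_zero]

theorem exists_transpose_mul_mul_map_eq_one (hq : 2 ≤ q) (hτ : ∀ x, τ x = x ^ q) {m : ℕ}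
    (A : Matrix (Fin m) (Fin m) k) (hA : IsUnit A.det) :
    ∃ T : Matrix (Fin m) (Fin m) k, IsUnit T.det ∧ Tᵀ * A * T.map τ = 1 := by
  induction m with
  | zero => exact ⟨1, by simp, Subsingleton.elim _ _⟩
  | succ m ih =>
    obtain ⟨w, hw, hww⟩ := exists_isHermitianVector_sesqForm_self_ne_zero hq hτ A hA
    obtain ⟨v, hv, horth⟩ := exists_sesqForm_self_eq_one hq hτ hw hww
    obtain ⟨T, A', hT, hTA⟩ := exists_transpose_mul_mul_map_eq_upperBlock hv horth
    have hA' : IsUnit A'.det := by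
      have := ((isUnit_det_transpose _ hT).mul hA).mul (isUnit_det_map τ hT)
      rwa [← det_mul, ← det_mul, hTA, det_upperBlock, one_mul] at this
    obtain ⟨T', hT', hTA'⟩ := ih A' hA'
    refine ⟨T * upperBlock 1 0 T', ?_, ?_⟩
    · rw [det_mul, det_upperBlock, one_mul]
      exact hT.mul hT'
    · calc (T * upperBlock 1 0 T')ᵀ * A * (T * upperBlock 1 0 T').map τ
            = (upperBlock 1 0 T')ᵀ * (Tᵀ * A * T.map τ) * (upperBlock 1 0 T').map τ := by
              simp only [transpose_mul, Matrix.map_mul, mul_assoc]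
        _ = 1 := by
          rw [hTA, upperBlock_transpose, upperBlock_map _ _ _ _ (map_zero τ), upperBlock_mul,
            upperBlock_mul, hTA']
          simp [upperBlock_one]

end NormalForm

end FermatNormalForm

theorem fermat_normal_form (p q e n : ℕ) (hp : p.Prime) (he : 0 < e) (hq : q = p ^ e)
    (k : Type*) [Field k] [IsAlgClosed k] [CharP k p]
    (A : Matrix (Fin (n + 1)) (Fin (n + 1)) k) (hA : IsUnit A.det) :
    ∃ T : Matrix (Fin (n + 1)) (Fin (n + 1)) k, IsUnit T.det ∧
      Tᵀ * A * T.map (fun x => x ^ q) = 1 := by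
  have := Fact.mk hp
  have hq2 : 2 ≤ q := hq ▸ hp.two_le.trans (Nat.le_self_pow he.ne' p)
  have hτ : ∀ x : k, iterateFrobenius k p e x = x ^ q := fun x => by
    rw [iterateFrobenius_def, hq]
  obtain ⟨T, hT, hTA⟩ := FermatNormalForm.exists_transpose_mul_mul_map_eq_one hq2 hτ A hA
  exact ⟨T, hT, funext hτ ▸ hTA⟩
end

section
/- Let k be an algebraically closed field of characteristic p > 0, q a power of p, and A ∈ M_{n+1}(k) a nonzero matrix. The hypersurface X_A ⊂ P^n defined by ∑_{i,j} a_ij x_i x_j^q = 0 is smooth if and only if rank(A) = n+1. -/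
open Matrix

/-- A point `x ≠ 0` of `Pⁿ` is a singular point of the hypersurface
`X_A : ∑ aᵢⱼ xᵢ xⱼ^q = 0` iff `A · x^{(q)} = 0`.  So `X_A` is smooth iff the only
solution of `A · x^{(q)} = 0` is `x = 0`. -/
theorem smooth_iff_rank_eq (p q e n : ℕ) (hp : p.Prime) (he : 0 < e) (hq : q = p ^ e)
    (k : Type*) [Field k] [IsAlgClosed k] [CharP k p]
    (A : Matrix (Fin (n + 1)) (Fin (n + 1)) k) (hA : A ≠ 0) :
    (∀ x : Fin (n + 1) → k, A.mulVec (fun i => x i ^ q) = 0 → x = 0) ↔ A.rank = n + 1 := by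
  have hq0 : 0 < q := by rw [hq]; exact pow_pos hp.pos e
  constructor
  · intro h
    have hinj : Function.Injective A.mulVecLin := by
      rw [← LinearMap.ker_eq_bot, LinearMap.ker_eq_bot']
      intro y hy
      obtain ⟨x, hx⟩ : ∃ x : Fin (n + 1) → k, (fun i => x i ^ q) = y := by
        choose x hx using fun i => IsAlgClosed.exists_pow_nat_eq (y i) hq0
        exact ⟨x, funext hx⟩
      have hx0 : x = 0 := by
        apply h
        rw [hx]
        exact hy
      rw [← hx, hx0]
      funext i
      simp [zero_pow hq0.ne']
    have hsurj := LinearMap.injective_iff_surjective.mp hinj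
    rw [Matrix.rank, LinearMap.range_eq_top.mpr hsurj, finrank_top]
    simp
  · intro hrank x hx
    have htop : LinearMap.range A.mulVecLin = ⊤ := by
      apply Submodule.eq_top_of_finrank_eq
      rw [← Matrix.rank, hrank]
      simp
    have hinj : Function.Injective A.mulVecLin :=
      LinearMap.injective_iff_surjective.mpr (LinearMap.range_eq_top.mp htop)
    have : (fun i => x i ^ q) = (0 : Fin (n + 1) → k) := by
      apply hinj
      rw [map_zero]
      exact hx
    funext i
    have := congrFun this i
    exact pow_eq_zero_iff hq0.ne' |>.mp this
end

section
/- Let G_{s,r} be the (n+1)×(n+1) matrix with block diagonal form diag(I_s, E_r, E_{n-s-r+1}) modified so that the row just below the E_r block has the vector a (of dimension s) in its first s entries and a 1 in its (s+r)-th column; here E_m denotes the m×m matrix with 1's on the subdiagonal and 0's elsewhere. Then for s ≥ 1, r ≥ 0, n-s-r-1 ≥ 0 and a a nonzero row vector of dimension s over an algebraically closed field k of characteristic p with q a power of p, one has G_{s,r} ∼ G_{s,r+2}', where G_{s,r+2}' is the analogous matrix with E_r replaced by E_{r+2}, E_{n-s-r+1} replaced by E_{n-s-r-1}, and a replaced by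 a^(q²) (entrywise q²-th power). Explicitly, an invertible matrix T_G with ᵗT_G G_{s,r} T_G^(q) = G_{s,r+2}' is given by the identity matrix modified by placing -ᵗa in rows 1..s of column s+r+1, and a^(q) in the first s columns of row s+r+2. -/
open Matrix

/-- The matrix `G_{s,r}`: block diagonal `diag(I_s, E_r, E_{n-s-r+1})`, with an
extra `1` at position `(s+r, s+r-1)` (the "0⋯0 1" block) and the row vector `a`
placed in the first `s` entries of row `s+r`.  Since the subdiagonal `1`s of the
`E_r` block, the extra `1`, and the subdiagonal `1`s of the `E_{n-s-r+1}` block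
together form the full subdiagonal in columns `s, …, n-1`, the matrix has the
following entrywise description. -/
def Gmat (k : Type*) [Field k] (n s r : ℕ) (a : Fin (n + 1) → k) :
    Matrix (Fin (n + 1)) (Fin (n + 1)) k :=
  fun i j =>
    (if i = j ∧ (j : ℕ) < s then 1 else 0) +
    (if (i : ℕ) = (j : ℕ) + 1 ∧ s ≤ (j : ℕ) then 1 else 0) +
    (if (i : ℕ) = s + r ∧ (j : ℕ) < s then a j else 0)

/-- The explicit transformation `T_G`: the identity matrix, modified by placing
`-ᵗa` in the first `s` rows of column `s+r`, and `a^{(q)}` in the first `s`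
columns of row `s+r+1`. -/
def TGmat (k : Type*) [Field k] (n s r q : ℕ) (a : Fin (n + 1) → k) :
    Matrix (Fin (n + 1)) (Fin (n + 1)) k :=
  fun i j =>
    (if i = j then 1 else 0) +
    (if (j : ℕ) = s + r ∧ (i : ℕ) < s then -(a i) else 0) +
    (if (i : ℕ) = s + r + 1 ∧ (j : ℕ) < s then a j ^ q else 0)

/-!
Write `G₀ = diag(I_s, E_{n+1-s})`, `eₘ` for the `m`-th standard vector and `c` for `a` cut down
to its first `s` entries. Then `G_{s,r} = G₀ + e_{s+r} ⊗ c` and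
`T_G = 1 + e_{s+r+1} ⊗ c^(q) - c ⊗ e_{s+r}`, so everything reduces to rank-one calculus.
Since `e_{s+r+1} G₀ = e_{s+r}` and `c G₀ = c`, one gets `ᵗT_G G_{s,r} = G₀ + c^(q) ⊗ e_{s+r}`.
As `x ↦ x^q` is a ring endomorphism, `T_G^(q) = 1 + e_{s+r+1} ⊗ c^(q²) - c^(q) ⊗ e_{s+r}`, and
since `G₀ e_{s+r+1} = e_{s+r+2}` and `G₀ c^(q) = c^(q)`, the product becomes
`G₀ + e_{s+r+2} ⊗ c^(q²)`. The vectors `c`, `c^(q)` have no support at `s+r`, `s+r+1`, which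
makes `(T_G - 1)³ = 0`, so `T_G` is invertible.
-/

namespace Matrix

variable {ι R : Type*} [Fintype ι] [DecidableEq ι] [CommRing R]

theorem isNilpotent_vecMulVec_sub_vecMulVec {u v c d : ι → R}
    (hdv : d ⬝ᵥ v = 0) (huv : u ⬝ᵥ v = 0) (huc : u ⬝ᵥ c = 0) :
    IsNilpotent (vecMulVec v d - vecMulVec c u) :=
  ⟨3, by simp [pow_succ, sub_mul, mul_sub, vecMulVec_mul_vecMulVec, hdv, huv, huc]⟩

theorem transpose_mul_add_vecMulVec_mul_eq {G : Matrix ι ι R}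
    {u v w c d f : ι → R} (hvG : v ᵥ* G = u) (hcG : c ᵥ* G = c) (hGv : G *ᵥ v = w)
    (hGd : G *ᵥ d = d) (huv : u ⬝ᵥ v = 0) (hcu : c ⬝ᵥ u = 0) (hud : u ⬝ᵥ d = 0) :
    (1 + (vecMulVec v d - vecMulVec c u))ᵀ * (G + vecMulVec u c) *
        (1 + (vecMulVec v f - vecMulVec d u)) = G + vecMulVec w f := by
  have hleft : (1 + (vecMulVec v d - vecMulVec c u))ᵀ * (G + vecMulVec u c) =
      G + vecMulVec d u := by
    simp only [transpose_add, transpose_sub, transpose_one, transpose_vecMulVec, add_mul, sub_mul,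
      mul_add, one_mul, vecMulVec_mul, vecMul_vecMulVec, hvG, hcG, dotProduct_comm v u, huv, hcu,
      zero_smul, vecMulVec_zero]
    abel
  rw [hleft]
  simp only [add_mul, mul_add, mul_sub, mul_one, mul_vecMulVec, vecMulVec_mulVec, hGv, hGd,
    huv, hud, MulOpposite.op_zero, zero_smul, zero_vecMulVec]
  abel

end Matrix

section

variable (R : Type*) [Semiring R] (n : ℕ)

/-- `diag(I_s, E_{n+1-s})`, the part of `G_{s,r}` independent of `r` and `a`. -/
def Gbase (s : ℕ) : Matrix (Fin (n + 1)) (Fin (n + 1)) R :=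
  fun i j =>
    (if i = j ∧ (j : ℕ) < s then 1 else 0) +
    (if (i : ℕ) = (j : ℕ) + 1 ∧ s ≤ (j : ℕ) then 1 else 0)

/-- Indexed by `ℕ` rather than `Fin (n + 1)`: for `m > n` this is the zero vector, which is
what `G_{s,r+2}` needs when its extra row `s + r + 2` falls outside the matrix. -/
def stdVec (m : ℕ) : Fin (n + 1) → R := fun i => if (i : ℕ) = m then 1 else 0

variable {R n}

def headVec (s : ℕ) (a : Fin (n + 1) → R) : Fin (n + 1) → R :=
  fun i => if (i : ℕ) < s then a i else 0

variable {s m : ℕ}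

theorem stdVec_eq_single (h : m < n + 1) : stdVec R n m = Pi.single ⟨m, h⟩ 1 := by
  ext i
  simp [stdVec, Pi.single_apply, Fin.ext_iff]

theorem stdVec_eq_zero (h : n + 1 ≤ m) : stdVec R n m = 0 := by
  ext i
  simp only [stdVec, Pi.zero_apply, ite_eq_right_iff]
  omega

theorem stdVec_dotProduct_stdVec {m' : ℕ} (h : m ≠ m') :
    stdVec R n m ⬝ᵥ stdVec R n m' = 0 := by
  rcases lt_or_ge m (n + 1) with hm | hm
  · rw [stdVec_eq_single hm, single_one_dotProduct, stdVec, if_neg h]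
  · rw [stdVec_eq_zero hm, zero_dotProduct]

theorem stdVec_dotProduct_headVec (h : s ≤ m) (a : Fin (n + 1) → R) :
    stdVec R n m ⬝ᵥ headVec s a = 0 := by
  rcases lt_or_ge m (n + 1) with hm | hm
  · rw [stdVec_eq_single hm, single_one_dotProduct, headVec, if_neg (by simpa using h)]
  · rw [stdVec_eq_zero hm, zero_dotProduct]

theorem headVec_dotProduct_stdVec (h : s ≤ m) (a : Fin (n + 1) → R) :
    headVec s a ⬝ᵥ stdVec R n m = 0 := by
  rcases lt_or_ge m (n + 1) with hm | hm
  · rw [stdVec_eq_single hm, dotProduct_single_one, headVec, if_neg (by simpa using h)]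
  · rw [stdVec_eq_zero hm, dotProduct_zero]

theorem stdVec_vecMul_Gbase (hs : s ≤ m) (hm : m < n) :
    stdVec R n (m + 1) ᵥ* Gbase R n s = stdVec R n m := by
  rw [stdVec_eq_single (by omega), single_one_vecMul]
  ext j
  simp only [row_apply, Gbase, stdVec, Fin.ext_iff]
  split_ifs <;> first | omega | simp

theorem Gbase_mulVec_stdVec (hs : s ≤ m) :
    Gbase R n s *ᵥ stdVec R n m = stdVec R n (m + 1) := by
  rcases lt_or_ge m (n + 1) with hm | hm
  · rw [stdVec_eq_single hm, mulVec_single_one]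
    ext i
    simp only [col_apply, Gbase, stdVec]
    split_ifs <;> first | omega | simp
  · rw [stdVec_eq_zero hm, stdVec_eq_zero (by omega), mulVec_zero]

theorem headVec_vecMul_Gbase (a : Fin (n + 1) → R) :
    headVec s a ᵥ* Gbase R n s = headVec s a := by
  ext j
  simp only [vecMul, dotProduct, Gbase, headVec, mul_add, Finset.sum_add_distrib]
  rw [Finset.sum_eq_single j (fun i _ hij => by simp [hij]) (by simp),
    Finset.sum_eq_zero fun i _ => by split_ifs <;> first | omega | simp]
  split_ifs <;> simp_all

theorem Gbase_mulVec_headVec (a : Fin (n + 1) → R) :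
    Gbase R n s *ᵥ headVec s a = headVec s a := by
  ext i
  simp only [mulVec, dotProduct, Gbase, headVec, add_mul, Finset.sum_add_distrib]
  rw [Finset.sum_eq_single i (fun j _ hij => by simp [Ne.symm hij]) (by simp),
    Finset.sum_eq_zero fun j _ => by split_ifs <;> first | omega | simp]
  split_ifs <;> simp_all

end

section

variable {k : Type*} [Field k] (n s r : ℕ)

theorem Gmat_eq_Gbase_add (a : Fin (n + 1) → k) :
    Gmat k n s r a = Gbase k n s + vecMulVec (stdVec k n (s + r)) (headVec s a) := by
  ext i j
  simp only [Gmat, Gbase, stdVec, headVec, Matrix.add_apply, vecMulVec_apply]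
  split_ifs <;> first | omega | simp_all

theorem TGmat_eq_one_add (q : ℕ) (a : Fin (n + 1) → k) :
    TGmat k n s r q a = 1 + (vecMulVec (stdVec k n (s + r + 1)) (headVec s fun j => a j ^ q) -
      vecMulVec (headVec s a) (stdVec k n (s + r))) := by
  ext i j
  simp only [TGmat, stdVec, headVec, Matrix.add_apply, Matrix.sub_apply, one_apply,
    vecMulVec_apply]
  split_ifs <;> first | omega | simp_all

theorem TGmat_map_pow (p e : ℕ) [ExpChar k p] (a : Fin (n + 1) → k) :
    (TGmat k n s r (p ^ e) a).map (· ^ p ^ e) = TGmat k n s r (p ^ e) fun j => a j ^ p ^ e := by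
  ext i j
  change iterateFrobenius k p e _ = _
  simp only [TGmat, map_add, map_neg, apply_ite (iterateFrobenius k p e), map_one, map_zero,
    iterateFrobenius_def]

end

theorem Gmat_equiv_general (p q e n s r : ℕ) (hp : p.Prime) (hq : q = p ^ e)
    (k : Type*) [Field k] [CharP k p]
    (hnsr : s + r + 1 ≤ n)
    (a : Fin (n + 1) → k) :
    IsUnit (TGmat k n s r q a).det ∧
      (TGmat k n s r q a)ᵀ * Gmat k n s r a * (TGmat k n s r q a).map (fun x => x ^ q) =
        Gmat k n s (r + 2) (fun j => a j ^ (q ^ 2)) := by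
  have : ExpChar k p := ExpChar.prime hp
  subst hq
  have hpow : (fun j => (a j ^ p ^ e) ^ p ^ e) = fun j => a j ^ (p ^ e) ^ 2 := by
    simp only [← pow_mul, sq]
  refine ⟨(isUnit_iff_isUnit_det _).mp ?_, ?_⟩
  · rw [TGmat_eq_one_add]
    exact IsNilpotent.isUnit_one_add <| isNilpotent_vecMulVec_sub_vecMulVec
      (headVec_dotProduct_stdVec (by omega) _) (stdVec_dotProduct_stdVec (by omega))
      (stdVec_dotProduct_headVec (by omega) _)
  · rw [TGmat_map_pow, TGmat_eq_one_add, TGmat_eq_one_add, Gmat_eq_Gbase_add, Gmat_eq_Gbase_add,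
      hpow]
    exact transpose_mul_add_vecMulVec_mul_eq (stdVec_vecMul_Gbase (by omega) (by omega))
      (headVec_vecMul_Gbase a) (Gbase_mulVec_stdVec (by omega)) (Gbase_mulVec_headVec _)
      (stdVec_dotProduct_stdVec (by omega)) (headVec_dotProduct_stdVec (by omega) a)
      (stdVec_dotProduct_headVec (by omega) _)

/-- Lemma 1: `G_{s,r} ∼ G_{s,r+2}` via the explicit matrix `T_G`. -/
theorem Gmat_equiv (p q e n s r : ℕ) (hp : p.Prime) (he : 0 < e) (hq : q = p ^ e)
    (k : Type*) [Field k] [IsAlgClosed k] [CharP k p]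
    (hs : 1 ≤ s) (hnsr : s + r + 1 ≤ n)
    (a : Fin (n + 1) → k) (ha : ∃ j : Fin (n + 1), (j : ℕ) < s ∧ a j ≠ 0) :
    IsUnit (TGmat k n s r q a).det ∧
      (TGmat k n s r q a)ᵀ * Gmat k n s r a * (TGmat k n s r q a).map (fun x => x ^ q) =
        Gmat k n s (r + 2) (fun j => a j ^ (q ^ 2)) :=
  Gmat_equiv_general p q e n s r hp hq k hnsr a
end

section
/- Let k be an algebraically closed field of characteristic p > 0 and q a power of p. Let P_s be the (n+1)×(n+1) matrix of block form with I_s in the upper-left, E_{n-s+1} in the lower-right (E_m the m×m matrix with ones on the subdiagonal), and a nonzero row vector a of dimension s placed in row s+1 within the first s columns. If n - s + 1 is even (and s ≥ 1), then P_s ∼ W_s, where W_s = diag(I_s, E_{n-s+1}) and ∼ denotes equivalence under A ↦ ᵗT A T^(q) for T ∈ GL_{n+1}(k). -/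
open Matrix

/-- The matrix `W_s = diag(I_s, E_{n-s+1})`, where `E_m` is the `m × m` matrix with
`1`s on the subdiagonal: entrywise, `1`s on the diagonal in the first `s` columns and
`1`s on the subdiagonal in columns `s, …, n-1`. -/
def Wmat (k : Type*) [Field k] (n s : ℕ) : Matrix (Fin (n + 1)) (Fin (n + 1)) k :=
  fun i j =>
    (if i = j ∧ (j : ℕ) < s then 1 else 0) +
    (if (i : ℕ) = (j : ℕ) + 1 ∧ s ≤ (j : ℕ) then 1 else 0)

/-- The matrix `P_s`: `W_s = diag(I_s, E_{n-s+1})` with the nonzero row vector `a`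
placed in the first `s` entries of row `s`. -/
def Pmat (k : Type*) [Field k] (n s : ℕ) (a : Fin (n + 1) → k) :
    Matrix (Fin (n + 1)) (Fin (n + 1)) k :=
  fun i j => Wmat k n s i j + (if (i : ℕ) = s ∧ (j : ℕ) < s then a j else 0)

/-!
Write `P_s = W_s + e_s aᵀ` with `a` supported on the first `s` coordinates, on which `W_s` acts
as the identity. Twisting by the transvection `1 - a e_sᵀ` removes the row `aᵀ` but creates the
column `-a^(q)` in position `s`; twisting next by `1 + e_{s+1} (a^(q))ᵀ` removes that column and,
since `W_s e_{s+1} = e_{s+2}`, creates the row `(a^(q²))ᵀ` in position `s + 2`. So the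
perturbation descends two rows at a time, and it falls off the matrix exactly when `n - s + 1`
is even.
-/

section TwistedCongr

variable {R m : Type*} [CommRing R] [Fintype m] [DecidableEq m]

/-- The paper's `A ∼ B` is `TwistedCongr φ A B` for `φ` the `q`-th power Frobenius. -/
def TwistedCongr (φ : R →+* R) (A B : Matrix m m R) : Prop :=
  ∃ T : Matrix m m R, IsUnit T.det ∧ Tᵀ * A * T.map φ = B

theorem TwistedCongr.refl (φ : R →+* R) (A : Matrix m m R) : TwistedCongr φ A A :=
  ⟨1, by simp, by simp⟩

theorem TwistedCongr.trans {φ : R →+* R} {A B C : Matrix m m R}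
    (hAB : TwistedCongr φ A B) (hBC : TwistedCongr φ B C) : TwistedCongr φ A C := by
  obtain ⟨T, hT, rfl⟩ := hAB
  obtain ⟨S, hS, rfl⟩ := hBC
  refine ⟨T * S, by simpa using hT.mul hS, ?_⟩
  simp only [transpose_mul, Matrix.map_mul, Matrix.mul_assoc]

theorem det_one_sub_vecMulVec (x y : m → R) : (1 - vecMulVec x y).det = 1 - y ⬝ᵥ x := by
  rw [sub_eq_add_neg, ← neg_vecMulVec, vecMulVec_eq Unit,
    det_one_add_replicateCol_mul_replicateRow, dotProduct_neg, sub_eq_add_neg]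

/-- Witnessed by the transvection `1 - x yᵀ`, whose transpose cancels `y zᵀ` against `W`. -/
theorem twistedCongr_add_vecMulVec (φ : R →+* R) {W : Matrix m m R} {x y z : m → R}
    (hxW : x ᵥ* W = z) (hxy : x ⬝ᵥ y = 0) :
    TwistedCongr φ (W + vecMulVec y z) (W - vecMulVec (W *ᵥ (φ ∘ x)) (φ ∘ y)) := by
  refine ⟨1 - vecMulVec x y, by simp [det_one_sub_vecMulVec, dotProduct_comm, hxy], ?_⟩
  have hleft : (1 - vecMulVec x y)ᵀ * (W + vecMulVec y z) = W := by
    rw [transpose_sub, transpose_one, transpose_vecMulVec, sub_mul, one_mul, mul_add,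
      vecMulVec_mul, vecMulVec_mul_vecMulVec, hxW, hxy, zero_smul, vecMulVec_zero]
    abel
  have hright : (1 - vecMulVec x y).map φ = 1 - vecMulVec (φ ∘ x) (φ ∘ y) := by
    ext i j
    simp [one_apply, vecMulVec_apply, apply_ite φ]
  rw [hleft, hright, Matrix.mul_sub, Matrix.mul_one, mul_vecMulVec]

end TwistedCongr

/-- Indexed by `ℕ`, so that it is `0` for `r > n`: this is how the perturbation leaves the
matrix. -/
def natSingle (R : Type*) [Zero R] [One R] (n r : ℕ) : Fin (n + 1) → R :=
  fun i => if (i : ℕ) = r then 1 else 0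

section natSingle

variable {R : Type*} [Semiring R] {n : ℕ}

theorem natSingle_eq_zero {r : ℕ} (hr : n < r) : natSingle R n r = 0 := by
  ext i
  simp [natSingle, show (i : ℕ) ≠ r by omega]

theorem comp_natSingle (φ : R →+* R) (r : ℕ) : φ ∘ natSingle R n r = natSingle R n r := by
  ext i
  simp [natSingle, apply_ite φ]

theorem dotProduct_natSingle_of_support {s : ℕ} {v : Fin (n + 1) → R}
    (hv : ∀ j : Fin (n + 1), s ≤ (j : ℕ) → v j = 0) {r : ℕ} (hr : s ≤ r) :
    v ⬝ᵥ natSingle R n r = 0 :=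
  Finset.sum_eq_zero fun j _ => by
    by_cases h : (j : ℕ) = r
    · simp [hv j (h ▸ hr)]
    · simp [natSingle, h]

end natSingle

section Wmat

variable {k : Type*} [Field k] {n s : ℕ}

theorem vecMul_Wmat_of_support {v : Fin (n + 1) → k}
    (hv : ∀ j : Fin (n + 1), s ≤ (j : ℕ) → v j = 0) : v ᵥ* Wmat k n s = v := by
  ext j
  simp only [vecMul, dotProduct, Wmat, mul_add, mul_ite, mul_one, mul_zero,
    Finset.sum_add_distrib]
  rw [Finset.sum_eq_single j (by grind) (by simp), Finset.sum_eq_zero (fun x _ => by grind)]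
  grind

theorem Wmat_mulVec_of_support {v : Fin (n + 1) → k}
    (hv : ∀ j : Fin (n + 1), s ≤ (j : ℕ) → v j = 0) : Wmat k n s *ᵥ v = v := by
  ext i
  simp only [mulVec, dotProduct, Wmat, add_mul, ite_mul, one_mul, zero_mul,
    Finset.sum_add_distrib]
  rw [Finset.sum_eq_single i (by grind) (by simp), Finset.sum_eq_zero (fun x _ => by grind)]
  grind

theorem natSingle_succ_vecMul_Wmat {r : ℕ} (hr : s ≤ r) (hrn : r < n) :
    natSingle k n (r + 1) ᵥ* Wmat k n s = natSingle k n r := by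
  ext j
  simp only [vecMul, dotProduct, Wmat, natSingle, mul_add, ite_mul, one_mul, zero_mul,
    Finset.sum_add_distrib]
  rw [Finset.sum_eq_zero (fun x _ => by grind),
    Finset.sum_eq_single ⟨r + 1, by omega⟩ (by grind) (by simp)]
  grind

theorem Wmat_mulVec_natSingle {r : ℕ} (hr : s ≤ r) :
    Wmat k n s *ᵥ natSingle k n r = natSingle k n (r + 1) := by
  ext i
  simp only [mulVec, dotProduct, Wmat, natSingle, add_mul, ite_mul, one_mul, zero_mul,
    Finset.sum_add_distrib]
  rw [Finset.sum_eq_zero (fun x _ => by grind), zero_add]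
  by_cases hrn : r ≤ n
  · rw [Finset.sum_eq_single ⟨r, by omega⟩ (by grind) (by simp)]
    grind
  · rw [Finset.sum_eq_zero (fun x _ => by grind)]
    grind

theorem twistedCongr_Wmat_add_vecMulVec_natSingle_add_two (φ : k →+* k) {r : ℕ} (hr : s ≤ r)
    (hrn : r < n) {v : Fin (n + 1) → k} (hv : ∀ j : Fin (n + 1), s ≤ (j : ℕ) → v j = 0) :
    TwistedCongr φ (Wmat k n s + vecMulVec (natSingle k n r) v)
      (Wmat k n s + vecMulVec (natSingle k n (r + 2)) (φ ∘ φ ∘ v)) := by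
  have hnegφv : ∀ j : Fin (n + 1), s ≤ (j : ℕ) → (-(φ ∘ v)) j = 0 := by
    simp +contextual [hv]
  have hrow := twistedCongr_add_vecMulVec φ (vecMul_Wmat_of_support hv)
    (dotProduct_natSingle_of_support hv hr)
  rw [Wmat_mulVec_of_support (by simpa using hnegφv), comp_natSingle, sub_eq_add_neg,
    ← neg_vecMulVec] at hrow
  have hcol := twistedCongr_add_vecMulVec φ (natSingle_succ_vecMul_Wmat hr hrn)
    (by rw [dotProduct_comm]; exact dotProduct_natSingle_of_support hnegφv (by omega))
  rw [comp_natSingle, Wmat_mulVec_natSingle (by omega)] at hcol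
  convert hrow.trans hcol using 2
  ext i j
  simp [vecMulVec_apply]

theorem twistedCongr_Wmat_add_vecMulVec_natSingle (φ : k →+* k) (t : ℕ) {r : ℕ}
    (hr : s ≤ r) (hrt : r + 2 * t = n + 1) {v : Fin (n + 1) → k}
    (hv : ∀ j : Fin (n + 1), s ≤ (j : ℕ) → v j = 0) :
    TwistedCongr φ (Wmat k n s + vecMulVec (natSingle k n r) v) (Wmat k n s) := by
  induction t generalizing r v with
  | zero =>
    rw [natSingle_eq_zero (by omega), zero_vecMulVec, add_zero]
    exact .refl φ _
  | succ t ih =>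
    exact (twistedCongr_Wmat_add_vecMulVec_natSingle_add_two φ hr (by omega) hv).trans
      (ih (by omega) (by omega) (by simp +contextual [hv]))

end Wmat

theorem Pmat_equiv_Wmat_of_even_general (p q e n s : ℕ) (hp : p.Prime)
    (hq : q = p ^ e) (k : Type*) [Field k] [CharP k p]
    (heven : Even (n - s + 1))
    (a : Fin (n + 1) → k) :
    ∃ T : Matrix (Fin (n + 1)) (Fin (n + 1)) k, IsUnit T.det ∧
      Tᵀ * Pmat k n s a * T.map (fun x => x ^ q) = Wmat k n s := by
  have : Fact p.Prime := ⟨hp⟩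
  obtain ⟨t, ht⟩ := heven
  have hP : Pmat k n s a = Wmat k n s +
      vecMulVec (natSingle k n s) (fun j : Fin (n + 1) => if (j : ℕ) < s then a j else 0) := by
    ext i j
    simp only [Pmat, natSingle, Matrix.add_apply, vecMulVec_apply, mul_ite, ite_mul, one_mul,
      mul_zero, zero_mul]
    grind
  have hFrob : (fun x : k => x ^ q) = iterateFrobenius k p e := by
    ext x
    simp [iterateFrobenius_def, hq]
  rw [hP, hFrob]
  exact twistedCongr_Wmat_add_vecMulVec_natSingle _ t le_rfl (by omega)
    (fun j hj => if_neg (by omega))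

/-- Lemma 4(1): if `n - s + 1` is even, then `P_s ∼ W_s`. -/
theorem Pmat_equiv_Wmat_of_even (p q e n s : ℕ) (hp : p.Prime) (he : 0 < e)
    (hq : q = p ^ e) (k : Type*) [Field k] [IsAlgClosed k] [CharP k p]
    (hs : 1 ≤ s) (hsn : s ≤ n) (heven : Even (n - s + 1))
    (a : Fin (n + 1) → k) (ha : ∃ j : Fin (n + 1), (j : ℕ) < s ∧ a j ≠ 0) :
    ∃ T : Matrix (Fin (n + 1)) (Fin (n + 1)) k, IsUnit T.det ∧
      Tᵀ * Pmat k n s a * T.map (fun x => x ^ q) = Wmat k n s :=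
  Pmat_equiv_Wmat_of_even_general p q e n s hp hq k heven a
end

section
/- Let k be an algebraically closed field of characteristic p > 0 and q a power of p. For 0 ≤ s ≠ s' ≤ n, the matrices W_s = diag(I_s, E_{n-s+1}) and W_{s'} = diag(I_{s'}, E_{n-s'+1}) are not equivalent: there is no T ∈ GL_{n+1}(k) and λ ∈ k^× with ᵗT W_s T^(q) = λ W_{s'}. Equivalently, the hypersurfaces X_s and X_{s'} in P^n are not projectively isomorphic. -/
open Matrix

namespace WmatPf

variable {k : Type*} [Field k] {m : ℕ}

/-- coordinate subspace: vectors supported on `A` -/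
def suppSub (k : Type*) [Field k] {m : ℕ} (A : Set (Fin m)) : Submodule k (Fin m → k) where
  carrier := {v | ∀ j, j ∉ A → v j = 0}
  add_mem' := by
    intro a b ha hb j hj
    simp only [Pi.add_apply, ha j hj, hb j hj, add_zero]
  zero_mem' := by intro j _; rfl
  smul_mem' := by
    intro c v hv j hj
    simp only [Pi.smul_apply, hv j hj, smul_zero]

lemma mem_suppSub {A : Set (Fin m)} {v : Fin m → k} :
    v ∈ suppSub k A ↔ ∀ j, j ∉ A → v j = 0 := Iff.rfl

lemma suppSub_inf (A B : Set (Fin m)) :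
    suppSub k A ⊓ suppSub k B = suppSub k (A ∩ B) := by
  apply le_antisymm
  · rintro v ⟨hva, hvb⟩ j hj
    rcases Classical.em (j ∈ A) with h | h
    · exact hvb j (fun hB => hj ⟨h, hB⟩)
    · exact hva j h
  · intro v hv
    exact ⟨fun j hj => hv j (fun h => hj h.1), fun j hj => hv j (fun h => hj h.2)⟩

/-- entrywise application of `φ` to a vector -/
def Fr (φ : k →+* k) (v : Fin m → k) : Fin m → k := fun i => φ (v i)

@[simp] lemma Fr_apply (φ : k →+* k) (v : Fin m → k) (i : Fin m) : Fr φ v i = φ (v i) := rfl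

lemma Fr_zero (φ : k →+* k) : Fr φ (0 : Fin m → k) = 0 := by
  funext i; simp [Fr]

lemma Fr_add (φ : k →+* k) (u v : Fin m → k) : Fr φ (u + v) = Fr φ u + Fr φ v := by
  funext i; simp [Fr]

lemma Fr_smul (φ : k →+* k) (c : k) (v : Fin m → k) : Fr φ (c • v) = φ c • Fr φ v := by
  funext i; simp [Fr, smul_eq_mul]

lemma Fr_mulVec (φ : k →+* k) (A : Matrix (Fin m) (Fin m) k) (v : Fin m → k) :
    Fr φ (A.mulVec v) = (A.map φ).mulVec (Fr φ v) := by
  funext i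
  simp only [Fr, Matrix.mulVec, dotProduct, Matrix.map_apply, map_sum]
  exact Finset.sum_congr rfl fun j _ => map_mul φ _ _

def gmap (φ : k →+* k) (W : Matrix (Fin m) (Fin m) k) (y : Fin m → k) : Fin m → k :=
  Fr φ (W.mulVec (Fr φ y))

lemma gmap_zero (φ : k →+* k) (W : Matrix (Fin m) (Fin m) k) : gmap φ W 0 = 0 := by
  simp [gmap, Fr_zero, Matrix.mulVec_zero]

lemma gmap_add (φ : k →+* k) (W : Matrix (Fin m) (Fin m) k) (u v : Fin m → k) :
    gmap φ W (u + v) = gmap φ W u + gmap φ W v := by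
  simp [gmap, Fr_add, Matrix.mulVec_add]

lemma gmap_smul (φ : k →+* k) (W : Matrix (Fin m) (Fin m) k) (c : k) (v : Fin m → k) :
    gmap φ W (c • v) = φ (φ c) • gmap φ W v := by
  simp [gmap, Fr_smul, Matrix.mulVec_smul]

/-- one step of the Z-chain -/
def Zstep (φ : k →+* k) (W : Matrix (Fin m) (Fin m) k) (N : Submodule k (Fin m → k)) :
    Submodule k (Fin m → k) where
  carrier := {y | gmap φ W y ∈ N}
  add_mem' := by
    intro a b ha hb
    simp only [Set.mem_setOf_eq, gmap_add] at *
    exact N.add_mem ha hb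
  zero_mem' := by simp only [Set.mem_setOf_eq, gmap_zero]; exact N.zero_mem
  smul_mem' := by
    intro c y hy
    simp only [Set.mem_setOf_eq, gmap_smul] at *
    exact N.smul_mem _ hy

lemma mem_Zstep {φ : k →+* k} {W : Matrix (Fin m) (Fin m) k} {N : Submodule k (Fin m → k)}
    {y : Fin m → k} : y ∈ Zstep φ W N ↔ gmap φ W y ∈ N := Iff.rfl

/-- the Z-chain of a matrix -/
def Zch (φ : k →+* k) (W : Matrix (Fin m) (Fin m) k) : ℕ → Submodule k (Fin m → k)
  | 0 => ⊥
  | K + 1 => Zstep φ W (Submodule.map (Wᵀ).mulVecLin (Zch φ W K))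

/-- image of a submodule under `gmap` (needs surjectivity of `φ`) -/
def gImg (φ : k →+* k) (hφ : Function.Surjective φ) (W : Matrix (Fin m) (Fin m) k)
    (N : Submodule k (Fin m → k)) : Submodule k (Fin m → k) where
  carrier := gmap φ W '' N
  add_mem' := by
    rintro a b ⟨u, hu, rfl⟩ ⟨v, hv, rfl⟩
    exact ⟨u + v, N.add_mem hu hv, gmap_add φ W u v⟩
  zero_mem' := ⟨0, N.zero_mem, gmap_zero φ W⟩
  smul_mem' := by
    rintro c x ⟨u, hu, rfl⟩
    obtain ⟨c1, rfl⟩ := hφ c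
    obtain ⟨d, rfl⟩ := hφ c1
    exact ⟨d • u, N.smul_mem d hu, gmap_smul φ W d u⟩

lemma mem_gImg {φ : k →+* k} {hφ : Function.Surjective φ} {W : Matrix (Fin m) (Fin m) k}
    {N : Submodule k (Fin m → k)} {x : Fin m → k} :
    x ∈ gImg φ hφ W N ↔ ∃ u ∈ N, gmap φ W u = x := by
  constructor
  · rintro ⟨u, hu, rfl⟩; exact ⟨u, hu, rfl⟩
  · rintro ⟨u, hu, rfl⟩; exact ⟨u, hu, rfl⟩

/-- the Y-chain of a matrix -/
def Ych (φ : k →+* k) (hφ : Function.Surjective φ) (W : Matrix (Fin m) (Fin m) k) :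
    ℕ → Submodule k (Fin m → k)
  | 0 => ⊥
  | K + 1 => Submodule.comap (Wᵀ).mulVecLin (gImg φ hφ W (Ych φ hφ W K))

lemma mem_map_inj {f : (Fin m → k) →ₗ[k] (Fin m → k)} (hf : Function.Injective f)
    {N : Submodule k (Fin m → k)} {x : Fin m → k} :
    f x ∈ Submodule.map f N ↔ x ∈ N := by
  constructor
  · rintro ⟨y, hy, he⟩; rwa [← hf he]
  · intro h; exact ⟨x, h, rfl⟩

section inv
variable (T : Matrix (Fin m) (Fin m) k) (hT : IsUnit T.det)

lemma mulVecLin_injective (hT : IsUnit T.det) : Function.Injective T.mulVecLin := by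
  haveI := T.invertibleOfIsUnitDet hT
  exact T.mulVec_injective_of_invertible

lemma mulVecLin_surjective (hT : IsUnit T.det) : Function.Surjective T.mulVecLin := by
  haveI := T.invertibleOfIsUnitDet hT
  exact T.mulVec_surjective_of_invertible

end inv

variable (φ : k →+* k)

lemma Zch_cov (T W W' : Matrix (Fin m) (Fin m) k) (hT : IsUnit T.det)
    (hrel : Tᵀ * W * T.map ⇑φ = W') (K : ℕ) :
    Zch φ W' K = Submodule.comap T.mulVecLin (Zch φ W K) := by
  have hTmap : IsUnit (T.map ⇑φ).det := by
    have h := RingHom.map_det φ T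
    rw [RingHom.mapMatrix_apply] at h
    rw [← h]; exact hT.map φ
  have hTmapT : IsUnit ((T.map ⇑φ)ᵀ).det := by rwa [Matrix.det_transpose]
  have key1 : ∀ y, gmap φ W' y = ((T.map ⇑φ)ᵀ).mulVec (gmap φ W (T.mulVec y)) := by
    intro y
    have h1 : W'.mulVec (Fr φ y) = Tᵀ.mulVec (W.mulVec (Fr φ (T.mulVec y))) := by
      rw [← hrel, Fr_mulVec, Matrix.mulVec_mulVec, Matrix.mulVec_mulVec]
    rw [gmap, h1, Fr_mulVec, Matrix.transpose_map]
    rfl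
  have key2 : W'ᵀ = (T.map ⇑φ)ᵀ * (Wᵀ * T) := by
    rw [← hrel, Matrix.transpose_mul, Matrix.transpose_mul, Matrix.transpose_transpose]
  induction K with
  | zero =>
      simp only [Zch, Submodule.comap_bot]
      exact (LinearMap.ker_eq_bot.mpr (mulVecLin_injective T hT)).symm
  | succ K ih =>
      ext y
      show gmap φ W' y ∈ Submodule.map (W'ᵀ).mulVecLin (Zch φ W' K) ↔ _
      rw [ih, key2, Matrix.mulVecLin_mul, Matrix.mulVecLin_mul, Submodule.map_comp,
        Submodule.map_comp,
        Submodule.map_comap_eq_of_surjective (mulVecLin_surjective T hT), key1 y]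
      have : ((T.map ⇑φ)ᵀ).mulVec (gmap φ W (T.mulVec y))
          = ((T.map ⇑φ)ᵀ).mulVecLin (gmap φ W (T.mulVec y)) := rfl
      rw [this, mem_map_inj (mulVecLin_injective _ hTmapT)]
      rfl

lemma Ych_cov (hφ : Function.Surjective ⇑φ) (T W W' : Matrix (Fin m) (Fin m) k)
    (hT : IsUnit T.det) (hrel : Tᵀ * W * T.map ⇑φ = W') (K : ℕ) :
    Ych φ hφ W' K = Submodule.comap T.mulVecLin (Ych φ hφ W K) := by
  have hTmap : IsUnit (T.map ⇑φ).det := by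
    have h := RingHom.map_det φ T
    rw [RingHom.mapMatrix_apply] at h
    rw [← h]; exact hT.map φ
  have hTmapT : IsUnit ((T.map ⇑φ)ᵀ).det := by rwa [Matrix.det_transpose]
  have key1 : ∀ y, gmap φ W' y = ((T.map ⇑φ)ᵀ).mulVec (gmap φ W (T.mulVec y)) := by
    intro y
    have h1 : W'.mulVec (Fr φ y) = Tᵀ.mulVec (W.mulVec (Fr φ (T.mulVec y))) := by
      rw [← hrel, Fr_mulVec, Matrix.mulVec_mulVec, Matrix.mulVec_mulVec]
    rw [gmap, h1, Fr_mulVec, Matrix.transpose_map]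
    rfl
  have key2 : ∀ y, (W'ᵀ).mulVec y = ((T.map ⇑φ)ᵀ).mulVec ((Wᵀ).mulVec (T.mulVec y)) := by
    intro y
    rw [← hrel, Matrix.transpose_mul, Matrix.transpose_mul, Matrix.transpose_transpose,
      Matrix.mulVec_mulVec, Matrix.mulVec_mulVec, Matrix.mul_assoc]
  induction K with
  | zero =>
      simp only [Ych, Submodule.comap_bot]
      exact (LinearMap.ker_eq_bot.mpr (mulVecLin_injective T hT)).symm
  | succ K ih =>
      ext y
      show (W'ᵀ).mulVec y ∈ gImg φ hφ W' (Ych φ hφ W' K) ↔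
        (Wᵀ).mulVec (T.mulVec y) ∈ gImg φ hφ W (Ych φ hφ W K)
      rw [ih, key2 y]
      constructor
      · rintro ⟨u, hu, he⟩
        refine ⟨T.mulVec u, hu, ?_⟩
        have := key1 u
        rw [this] at he
        exact mulVecLin_injective _ hTmapT he
      · rintro ⟨v, hv, he⟩
        obtain ⟨u, rfl⟩ := mulVecLin_surjective T hT v
        refine ⟨u, hv, ?_⟩
        rw [key1 u]
        show ((T.map ⇑φ)ᵀ).mulVec (gmap φ W (T.mulVecLin u)) = _
        rw [he]


section WmatCalc

variable {n s : ℕ}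

lemma Wmat_apply' (i j : Fin (n+1)) : Wmat k n s i j =
    (if (i:ℕ) = (j:ℕ) ∧ (j:ℕ) < s then 1 else 0) +
    (if (i:ℕ) = (j:ℕ) + 1 ∧ s ≤ (j:ℕ) then 1 else 0) := by
  simp only [Wmat, Fin.ext_iff]

lemma Wmat_mulVec_lt {v : Fin (n+1) → k} {i : Fin (n+1)} (hi : (i:ℕ) < s) :
    (Wmat k n s).mulVec v i = v i := by
  show ∑ j, Wmat k n s i j * v j = v i
  rw [Finset.sum_eq_single i]
  · rw [Wmat_apply', if_pos ⟨rfl, hi⟩, if_neg (by omega), add_zero, one_mul]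
  · intro j _ hj
    have hj' : (i:ℕ) ≠ (j:ℕ) := fun h => hj (Fin.ext h.symm)
    rw [Wmat_apply', if_neg (by omega), if_neg (by omega)]
    ring
  · intro h; exact absurd (Finset.mem_univ i) h

lemma Wmat_mulVec_mid {v : Fin (n+1) → k} {i : Fin (n+1)} (hi : ¬ (i:ℕ) < s)
    (hi2 : ¬ s < (i:ℕ)) : (Wmat k n s).mulVec v i = 0 := by
  show ∑ j, Wmat k n s i j * v j = 0
  apply Finset.sum_eq_zero
  intro j _
  rw [Wmat_apply', if_neg (by omega), if_neg (by omega)]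
  ring

lemma Wmat_mulVec_gt {v : Fin (n+1) → k} {i : Fin (n+1)} (hi : s < (i:ℕ)) :
    (Wmat k n s).mulVec v i = v ⟨(i:ℕ)-1, by omega⟩ := by
  show ∑ j, Wmat k n s i j * v j = _
  rw [Finset.sum_eq_single (⟨(i:ℕ)-1, by omega⟩ : Fin (n+1))]
  · rw [Wmat_apply', if_neg (by simp only [Fin.val_mk]; omega),
      if_pos (by refine ⟨?_, ?_⟩ <;> (simp only [Fin.val_mk]; omega)), zero_add, one_mul]
  · intro j _ hj
    have hj' : (j:ℕ) ≠ (i:ℕ) - 1 := by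
      intro h; exact hj (Fin.ext (by simpa using h))
    rw [Wmat_apply', if_neg (by omega), if_neg (by omega)]
    ring
  · intro h; exact absurd (Finset.mem_univ _) h

lemma WmatT_mulVec_lt {v : Fin (n+1) → k} {j : Fin (n+1)} (hj : (j:ℕ) < s) :
    ((Wmat k n s)ᵀ).mulVec v j = v j := by
  show ∑ i, (Wmat k n s)ᵀ j i * v i = v j
  rw [Finset.sum_eq_single j]
  · rw [Matrix.transpose_apply, Wmat_apply', if_pos ⟨rfl, hj⟩, if_neg (by omega),
      add_zero, one_mul]
  · intro i _ hi
    have hi' : (i:ℕ) ≠ (j:ℕ) := fun h => hi (Fin.ext h)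
    rw [Matrix.transpose_apply, Wmat_apply', if_neg (by omega), if_neg (by omega)]
    ring
  · intro h; exact absurd (Finset.mem_univ _) h

lemma WmatT_mulVec_mid {v : Fin (n+1) → k} {j : Fin (n+1)} (hj : ¬ (j:ℕ) < s)
    (hj2 : (j:ℕ) < n) : ((Wmat k n s)ᵀ).mulVec v j = v ⟨(j:ℕ)+1, by omega⟩ := by
  show ∑ i, (Wmat k n s)ᵀ j i * v i = _
  rw [Finset.sum_eq_single (⟨(j:ℕ)+1, by omega⟩ : Fin (n+1))]
  · rw [Matrix.transpose_apply, Wmat_apply', if_neg (by simp only [Fin.val_mk]; omega),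
      if_pos ⟨rfl, by omega⟩, zero_add, one_mul]
  · intro i _ hi
    have hi' : (i:ℕ) ≠ (j:ℕ) + 1 := by
      intro h; exact hi (Fin.ext (by simpa using h))
    rw [Matrix.transpose_apply, Wmat_apply', if_neg (by omega), if_neg (by omega)]
    ring
  · intro h; exact absurd (Finset.mem_univ _) h

lemma WmatT_mulVec_top (hs : s ≤ n) {v : Fin (n+1) → k} {j : Fin (n+1)}
    (hj2 : ¬ (j:ℕ) < n) : ((Wmat k n s)ᵀ).mulVec v j = 0 := by
  have hjn : (j:ℕ) = n := by have := j.isLt; omega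
  show ∑ i, (Wmat k n s)ᵀ j i * v i = 0
  apply Finset.sum_eq_zero
  intro i _
  have := i.isLt
  rw [Matrix.transpose_apply, Wmat_apply', if_neg (by omega), if_neg (by omega)]
  ring

end WmatCalc


section ChainCalc

variable {n s : ℕ} {φ : k →+* k}

def Zset (n s K : ℕ) : Set (Fin (n+1)) :=
  {j | s ≤ (j:ℕ) ∧ 2 ∣ (n - (j:ℕ)) ∧ n - (j:ℕ) < 2*K}

def Zset' (n s K : ℕ) : Set (Fin (n+1)) :=
  {c | s ≤ (c:ℕ) ∧ (c:ℕ) < n ∧ 2 ∣ (n - (c:ℕ) - 1) ∧ n - (c:ℕ) - 1 < 2*K}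

def Yset (n s K : ℕ) : Set (Fin (n+1)) :=
  {j | s ≤ (j:ℕ) ∧ 2 ∣ ((j:ℕ) - s) ∧ (j:ℕ) - s < 2*K}

def Yset' (n s K : ℕ) : Set (Fin (n+1)) :=
  {c | s < (c:ℕ) ∧ 2 ∣ ((c:ℕ) - s - 1) ∧ (c:ℕ) - s - 1 < 2*K}

lemma mem_Zset {K : ℕ} {j : Fin (n+1)} :
    j ∈ Zset n s K ↔ s ≤ (j:ℕ) ∧ 2 ∣ (n - (j:ℕ)) ∧ n - (j:ℕ) < 2*K := Iff.rfl
lemma mem_Zset' {K : ℕ} {c : Fin (n+1)} :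
    c ∈ Zset' n s K ↔ s ≤ (c:ℕ) ∧ (c:ℕ) < n ∧ 2 ∣ (n - (c:ℕ) - 1) ∧ n - (c:ℕ) - 1 < 2*K :=
  Iff.rfl
lemma mem_Yset {K : ℕ} {j : Fin (n+1)} :
    j ∈ Yset n s K ↔ s ≤ (j:ℕ) ∧ 2 ∣ ((j:ℕ) - s) ∧ (j:ℕ) - s < 2*K := Iff.rfl
lemma mem_Yset' {K : ℕ} {c : Fin (n+1)} :
    c ∈ Yset' n s K ↔ s < (c:ℕ) ∧ 2 ∣ ((c:ℕ) - s - 1) ∧ (c:ℕ) - s - 1 < 2*K := Iff.rfl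

def zWitness (n s : ℕ) (w : Fin (n+1) → k) : Fin (n+1) → k :=
  fun j => if h : s < (j:ℕ) then w ⟨(j:ℕ)-1, by omega⟩ else 0

lemma zWitness_pos {w : Fin (n+1) → k} {j : Fin (n+1)} (h : s < (j:ℕ)) :
    zWitness n s w j = w ⟨(j:ℕ)-1, by omega⟩ := dif_pos h

lemma zWitness_neg {w : Fin (n+1) → k} {j : Fin (n+1)} (h : ¬ s < (j:ℕ)) :
    zWitness n s w j = 0 := dif_neg h

def yWitness (n s K : ℕ) (r : k → k) (w : Fin (n+1) → k) : Fin (n+1) → k :=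
  fun j => if h : s ≤ (j:ℕ) ∧ (j:ℕ) < n ∧ 2 ∣ ((j:ℕ) - s) ∧ (j:ℕ) - s < 2*K
    then r (w ⟨(j:ℕ)+1, by omega⟩) else 0

lemma yWitness_pos {K : ℕ} {r : k → k} {w : Fin (n+1) → k} {j : Fin (n+1)}
    (h : s ≤ (j:ℕ) ∧ (j:ℕ) < n ∧ 2 ∣ ((j:ℕ) - s) ∧ (j:ℕ) - s < 2*K) :
    yWitness n s K r w j = r (w ⟨(j:ℕ)+1, by omega⟩) := dif_pos h

lemma yWitness_neg {K : ℕ} {r : k → k} {w : Fin (n+1) → k} {j : Fin (n+1)}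
    (h : ¬ (s ≤ (j:ℕ) ∧ (j:ℕ) < n ∧ 2 ∣ ((j:ℕ) - s) ∧ (j:ℕ) - s < 2*K)) :
    yWitness n s K r w j = 0 := dif_neg h

lemma ZsetMap (hs : s ≤ n) (K : ℕ) :
    Submodule.map ((Wmat k n s)ᵀ).mulVecLin (suppSub k (Zset n s K))
      = suppSub k (Zset' n s K) := by
  apply le_antisymm
  · rintro _ ⟨x, hx, rfl⟩ c hc
    show ((Wmat k n s)ᵀ).mulVec x c = 0
    by_cases h1 : (c:ℕ) < s
    · rw [WmatT_mulVec_lt h1]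
      exact hx c (fun hm => absurd (mem_Zset.mp hm).1 (by omega))
    · by_cases h2 : (c:ℕ) < n
      · rw [WmatT_mulVec_mid h1 h2]
        apply hx
        intro hm
        obtain ⟨hm1, hm2, hm3⟩ := mem_Zset.mp hm
        simp only [Fin.val_mk] at hm1 hm2 hm3
        exact hc (mem_Zset'.mpr ⟨by omega, h2, by omega, by omega⟩)
      · rw [WmatT_mulVec_top hs h2]
  · intro w hw
    refine ⟨zWitness n s w, ?_, ?_⟩
    · intro j hj
      by_cases h : s < (j:ℕ)
      · rw [zWitness_pos h]
        apply hw
        intro hm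
        obtain ⟨hm1, hm2, hm3, hm4⟩ := mem_Zset'.mp hm
        simp only [Fin.val_mk] at hm1 hm2 hm3 hm4
        exact hj (mem_Zset.mpr ⟨by omega, by omega, by omega⟩)
      · rw [zWitness_neg h]
    · funext c
      show ((Wmat k n s)ᵀ).mulVec _ c = w c
      by_cases h1 : (c:ℕ) < s
      · rw [WmatT_mulVec_lt h1, zWitness_neg (by omega)]
        exact (hw c (fun hm => absurd (mem_Zset'.mp hm).1 (by omega))).symm
      · by_cases h2 : (c:ℕ) < n
        · rw [WmatT_mulVec_mid h1 h2, zWitness_pos (by simp only [Fin.val_mk]; omega)]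
          exact congrArg w (Fin.ext (by simp only [Fin.val_mk]; omega))
        · rw [WmatT_mulVec_top hs h2]
          exact (hw c (fun hm => absurd (mem_Zset'.mp hm).2.1 h2)).symm

lemma Zch_Wmat (hinj : Function.Injective ⇑φ) (hs : s ≤ n) (K : ℕ) :
    Zch φ (Wmat k n s) K = suppSub k (Zset n s K) := by
  induction K with
  | zero =>
      apply le_antisymm
      · exact bot_le
      · intro v hv
        rw [show Zch φ (Wmat k n s) 0 = ⊥ from rfl, Submodule.mem_bot]
        funext j
        exact hv j (fun hm => by have := (mem_Zset.mp hm).2.2; omega)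
  | succ K ih =>
      ext y
      show gmap φ (Wmat k n s) y ∈
        Submodule.map ((Wmat k n s)ᵀ).mulVecLin (Zch φ (Wmat k n s) K) ↔ _
      rw [ih, ZsetMap hs]
      constructor
      · intro H j hj
        by_cases h1 : (j:ℕ) < s
        · have h0 : φ ((Wmat k n s).mulVec (Fr φ y) j) = 0 :=
            H j (fun hm => absurd (mem_Zset'.mp hm).1 (by omega))
          rw [Wmat_mulVec_lt h1, Fr_apply, map_eq_zero_iff φ hinj,
            map_eq_zero_iff φ hinj] at h0
          exact h0
        · have hjn : (j:ℕ) < n := by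
            rcases Nat.lt_or_ge (j:ℕ) n with h | h
            · exact h
            · exfalso
              exact hj (mem_Zset.mpr ⟨by omega, by have := j.isLt; omega,
                by have := j.isLt; omega⟩)
          have hc : (⟨(j:ℕ)+1, by omega⟩ : Fin (n+1)) ∉ Zset' n s K := by
            intro hm
            obtain ⟨hm1, hm2, hm3, hm4⟩ := mem_Zset'.mp hm
            simp only [Fin.val_mk] at hm1 hm2 hm3 hm4
            exact hj (mem_Zset.mpr ⟨by omega, by omega, by omega⟩)
          have h0 : φ ((Wmat k n s).mulVec (Fr φ y) ⟨(j:ℕ)+1, by omega⟩) = 0 := H _ hc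
          rw [Wmat_mulVec_gt (by simp only [Fin.val_mk]; omega)] at h0
          have hidx : (⟨((⟨(j:ℕ)+1, by omega⟩ : Fin (n+1)):ℕ)-1,
              by simp only [Fin.val_mk]; omega⟩ : Fin (n+1)) = j :=
            Fin.ext (by simp only [Fin.val_mk]; omega)
          rw [hidx, Fr_apply, map_eq_zero_iff φ hinj, map_eq_zero_iff φ hinj] at h0
          exact h0
      · intro H c hc
        show φ ((Wmat k n s).mulVec (Fr φ y) c) = 0
        by_cases h1 : (c:ℕ) < s
        · rw [Wmat_mulVec_lt h1, Fr_apply,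
            H c (fun hm => absurd (mem_Zset.mp hm).1 (by omega)), map_zero, map_zero]
        · by_cases h2 : s < (c:ℕ)
          · rw [Wmat_mulVec_gt h2, Fr_apply]
            have : y ⟨(c:ℕ)-1, by omega⟩ = 0 := by
              apply H
              intro hm
              obtain ⟨hm1, hm2, hm3⟩ := mem_Zset.mp hm
              simp only [Fin.val_mk] at hm1 hm2 hm3
              have hcn : (c:ℕ) ≤ n := by have := c.isLt; omega
              exact hc (mem_Zset'.mpr ⟨by omega, by omega, by omega, by omega⟩)
            rw [this, map_zero, map_zero]
          · rw [Wmat_mulVec_mid h1 h2, map_zero]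

lemma gImgWmat (hφ : Function.Surjective ⇑φ) (hs : s ≤ n) (K : ℕ) :
    gImg φ hφ (Wmat k n s) (suppSub k (Yset n s K)) = suppSub k (Yset' n s K) := by
  apply le_antisymm
  · rintro _ ⟨u, hu, rfl⟩ c hc
    show φ ((Wmat k n s).mulVec (Fr φ u) c) = 0
    by_cases h1 : (c:ℕ) < s
    · rw [Wmat_mulVec_lt h1, Fr_apply,
        hu c (fun hm => absurd (mem_Yset.mp hm).1 (by omega)), map_zero, map_zero]
    · by_cases h2 : s < (c:ℕ)
      · rw [Wmat_mulVec_gt h2, Fr_apply]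
        have : u ⟨(c:ℕ)-1, by omega⟩ = 0 := by
          apply hu
          intro hm
          obtain ⟨hm1, hm2, hm3⟩ := mem_Yset.mp hm
          simp only [Fin.val_mk] at hm1 hm2 hm3
          exact hc (mem_Yset'.mpr ⟨by omega, by omega, by omega⟩)
        rw [this, map_zero, map_zero]
      · rw [Wmat_mulVec_mid h1 h2, map_zero]
  · intro w hw
    have hroot : ∀ a : k, ∃ b, φ (φ b) = a := by
      intro a
      obtain ⟨b1, hb1⟩ := hφ a
      obtain ⟨b, hb⟩ := hφ b1
      exact ⟨b, by rw [hb, hb1]⟩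
    choose r hr using hroot
    refine ⟨yWitness n s K r w, ?_, ?_⟩
    · intro j hj
      rw [yWitness_neg]
      intro h
      exact hj (mem_Yset.mpr ⟨h.1, h.2.2.1, h.2.2.2⟩)
    · funext c
      show φ ((Wmat k n s).mulVec (Fr φ _) c) = w c
      by_cases h1 : (c:ℕ) < s
      · rw [Wmat_mulVec_lt h1, Fr_apply, yWitness_neg (by omega), map_zero, map_zero]
        exact (hw c (fun hm => absurd (mem_Yset'.mp hm).1 (by omega))).symm
      · by_cases h2 : s < (c:ℕ)
        · rw [Wmat_mulVec_gt h2, Fr_apply]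
          by_cases hcY : c ∈ Yset' n s K
          · obtain ⟨hc1, hc2, hc3⟩ := mem_Yset'.mp hcY
            have hcn : (c:ℕ) ≤ n := by have := c.isLt; omega
            rw [yWitness_pos (by simp only [Fin.val_mk]; exact ⟨by omega, by omega, by omega, by omega⟩)]
            rw [hr]
            congr 1
            exact Fin.ext (by simp only [Fin.val_mk]; omega)
          · rw [yWitness_neg, map_zero, map_zero]
            · exact (hw c hcY).symm
            · intro h
              simp only [Fin.val_mk] at h
              obtain ⟨ha, hb, hcd, hd⟩ := h
              exact hcY (mem_Yset'.mpr ⟨by omega, by omega, by omega⟩)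
        · rw [Wmat_mulVec_mid h1 h2, map_zero]
          exact (hw c (fun hm => absurd (mem_Yset'.mp hm).1 (by omega))).symm

lemma Ych_Wmat (hφ : Function.Surjective ⇑φ) (hs : s ≤ n) (K : ℕ) :
    Ych φ hφ (Wmat k n s) K = suppSub k (Yset n s K) := by
  induction K with
  | zero =>
      apply le_antisymm
      · exact bot_le
      · intro v hv
        rw [show Ych φ hφ (Wmat k n s) 0 = ⊥ from rfl, Submodule.mem_bot]
        funext j
        exact hv j (fun hm => by have := (mem_Yset.mp hm).2.2; omega)
  | succ K ih =>
      ext x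
      show ((Wmat k n s)ᵀ).mulVec x ∈ gImg φ hφ (Wmat k n s) (Ych φ hφ (Wmat k n s) K) ↔ _
      rw [ih, gImgWmat hφ hs]
      constructor
      · intro H j hj
        by_cases h1 : (j:ℕ) < s
        · have h0 := H j (fun hm => absurd (mem_Yset'.mp hm).1 (by omega))
          rwa [WmatT_mulVec_lt h1] at h0
        · have hjs : s < (j:ℕ) := by
            rcases Nat.lt_or_ge s (j:ℕ) with h | h
            · exact h
            · exfalso
              exact hj (mem_Yset.mpr ⟨by omega, by omega, by omega⟩)
          have hc : (⟨(j:ℕ)-1, by omega⟩ : Fin (n+1)) ∉ Yset' n s K := by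
            intro hm
            obtain ⟨hm1, hm2, hm3⟩ := mem_Yset'.mp hm
            simp only [Fin.val_mk] at hm1 hm2 hm3
            exact hj (mem_Yset.mpr ⟨by omega, by omega, by omega⟩)
          have h0 := H _ hc
          have hjn : (j:ℕ) ≤ n := by have := j.isLt; omega
          rw [WmatT_mulVec_mid (by simp only [Fin.val_mk]; omega)
            (by simp only [Fin.val_mk]; omega)] at h0
          have hidx : (⟨((⟨(j:ℕ)-1, by omega⟩ : Fin (n+1)):ℕ)+1,
              by simp only [Fin.val_mk]; omega⟩ : Fin (n+1)) = j :=
            Fin.ext (by simp only [Fin.val_mk]; omega)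
          rwa [hidx] at h0
      · intro H c hc
        by_cases h1 : (c:ℕ) < s
        · rw [WmatT_mulVec_lt h1]
          exact H c (fun hm => absurd (mem_Yset.mp hm).1 (by omega))
        · by_cases h2 : (c:ℕ) < n
          · rw [WmatT_mulVec_mid h1 h2]
            apply H
            intro hm
            obtain ⟨hm1, hm2, hm3⟩ := mem_Yset.mp hm
            simp only [Fin.val_mk] at hm1 hm2 hm3
            exact hc (mem_Yset'.mpr ⟨by omega, by omega, by omega⟩)
          · rw [WmatT_mulVec_top hs h2]

end ChainCalc


section Count

variable {n s : ℕ}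

lemma suppSub_finrank {m : ℕ} (A : Set (Fin m)) :
    Module.finrank k (suppSub k A) = Nat.card A := by
  classical
  haveI : Fintype A := (Set.toFinite A).fintype
  let e : suppSub k A ≃ₗ[k] (A → k) :=
    { toFun := fun v a => v.1 a
      map_add' := fun u v => rfl
      map_smul' := fun c v => rfl
      invFun := fun w => ⟨fun j => if h : j ∈ A then w ⟨j, h⟩ else 0,
        fun j hj => dif_neg hj⟩
      left_inv := by
        intro v
        apply Subtype.ext
        funext j
        show (if h : j ∈ A then v.1 j else 0) = v.1 j
        by_cases h : j ∈ A
        · exact dif_pos h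
        · rw [dif_neg h, v.2 j h]
      right_inv := by
        intro w
        funext a
        show (if h : (a : Fin m) ∈ A then w ⟨a, h⟩ else 0) = w a
        rw [dif_pos a.2] }
  rw [e.finrank_eq, Module.finrank_fintype_fun_eq_card, Nat.card_eq_fintype_card]

lemma finrank_comap (T : Matrix (Fin (n+1)) (Fin (n+1)) k) (hT : IsUnit T.det)
    (N : Submodule k (Fin (n+1) → k)) :
    Module.finrank k (Submodule.comap T.mulVecLin N) = Module.finrank k N := by
  have h1 : Submodule.map T.mulVecLin (Submodule.comap T.mulVecLin N) = N :=
    Submodule.map_comap_eq_of_surjective (mulVecLin_surjective T hT) N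
  have h2 := (Submodule.equivMapOfInjective T.mulVecLin (mulVecLin_injective T hT)
    (Submodule.comap T.mulVecLin N)).finrank_eq
  rw [h2, h1]

lemma card_Zfull (hs : s ≤ n) : Nat.card (Zset n s (n+1)) = (n-s)/2 + 1 := by
  have himg : (Zset n s (n+1) : Set (Fin (n+1)))
      = ↑((Finset.range ((n-s)/2+1)).image
          (fun i => (⟨n-2*i, by omega⟩ : Fin (n+1)))) := by
    ext j
    have hjb := j.isLt
    simp only [Finset.coe_image, Finset.coe_range, Set.mem_image, Set.mem_Iio, mem_Zset]
    constructor
    · rintro ⟨h1, h2, h3⟩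
      exact ⟨(n-(j:ℕ))/2, by omega, Fin.ext (by simp only [Fin.val_mk]; omega)⟩
    · rintro ⟨i, hi, rfl⟩
      simp only [Fin.val_mk]
      omega
  rw [Nat.card_coe_set_eq, himg, Set.ncard_coe_finset,
    Finset.card_image_of_injOn, Finset.card_range]
  intro i hi j hj h
  have := congrArg Fin.val h
  simp only [Fin.val_mk] at this
  simp only [Finset.coe_range, Set.mem_Iio] at hi hj
  omega

lemma card_ZYfull_even (hs : s ≤ n) (hpar : 2 ∣ (n - s)) :
    Nat.card (Zset n s (n+1) ∩ Yset n s (n+1) : Set (Fin (n+1))) = (n-s)/2 + 1 := by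
  have hset : (Zset n s (n+1) ∩ Yset n s (n+1) : Set (Fin (n+1))) = Zset n s (n+1) := by
    ext j
    have hjb := j.isLt
    simp only [Set.mem_inter_iff, mem_Zset, mem_Yset]
    omega
  rw [hset]
  exact card_Zfull hs

lemma card_ZYfull_odd (hs : s ≤ n) (hpar : ¬ 2 ∣ (n - s)) :
    Nat.card (Zset n s (n+1) ∩ Yset n s (n+1) : Set (Fin (n+1))) = 0 := by
  have hset : (Zset n s (n+1) ∩ Yset n s (n+1) : Set (Fin (n+1))) = (∅ : Set (Fin (n+1))) := by
    ext j
    have hjb := j.isLt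
    simp only [Set.mem_inter_iff, mem_Zset, mem_Yset, Set.mem_empty_iff_false, iff_false,
      not_and]
    intro h1 h2 h3
    omega
  rw [hset]
  simp [Nat.card_coe_set_eq]

end Count

end WmatPf

open WmatPf

/-- Main theorem (uniqueness part): for `s ≠ s'`, the matrices `W_s` and `W_{s'}`
are not equivalent, i.e. the hypersurfaces `X_s` and `X_{s'}` are not projectively
isomorphic. -/
theorem Wmat_not_equiv (p q e n s s' : ℕ) (hp : p.Prime) (he : 0 < e) (hq : q = p ^ e)
    (k : Type*) [Field k] [IsAlgClosed k] [CharP k p]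
    (hs : s ≤ n) (hs' : s' ≤ n) (hne : s ≠ s') :
    ¬ ∃ (T : Matrix (Fin (n + 1)) (Fin (n + 1)) k) (lam : k), IsUnit T.det ∧ lam ≠ 0 ∧
        Tᵀ * Wmat k n s * T.map (fun x => x ^ q) = lam • Wmat k n s' := by
  rintro ⟨T, lam, hdet, hlam, heq⟩
  haveI := Fact.mk hp
  set φ : k →+* k := iterateFrobenius k p e with hφdef
  have hφx : ∀ x : k, φ x = x ^ q := by
    intro x
    rw [hq]
    rfl
  have hinj : Function.Injective ⇑φ := φ.injective
  have hq0 : 0 < q := by rw [hq]; exact pow_pos hp.pos e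
  have hφs : Function.Surjective ⇑φ := by
    intro a
    obtain ⟨z, hz⟩ := IsAlgClosed.exists_pow_nat_eq a hq0
    exact ⟨z, by rw [hφx, hz]⟩
  have hmapφ : T.map (fun x => x ^ q) = T.map ⇑φ := by
    ext i j
    simp only [Matrix.map_apply, hφx]
  rw [hmapφ] at heq
  obtain ⟨μ, hμ⟩ := IsAlgClosed.exists_pow_nat_eq lam⁻¹ (show 0 < q + 1 by omega)
  have hμ0 : μ ≠ 0 := by
    intro h
    rw [h, zero_pow (show q + 1 ≠ 0 by omega)] at hμ
    exact inv_ne_zero hlam hμ.symm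
  set T' := μ • T with hT'
  have hdet' : IsUnit T'.det := by
    rw [hT', Matrix.det_smul]
    exact (isUnit_iff_ne_zero.mpr (pow_ne_zero _ hμ0)).mul hdet
  have hrel : T'ᵀ * Wmat k n s * T'.map ⇑φ = Wmat k n s' := by
    have h1 : T'.map ⇑φ = φ μ • T.map ⇑φ := by
      ext i j
      simp only [hT', Matrix.map_apply, Matrix.smul_apply, smul_eq_mul, _root_.map_mul]
    rw [hT', Matrix.transpose_smul, h1, Matrix.smul_mul, Matrix.smul_mul, Matrix.mul_smul,
      heq, smul_smul, smul_smul, hφx, ← pow_succ' μ q, hμ, inv_mul_cancel₀ hlam, one_smul]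
  have hZ : suppSub k (Zset n s' (n+1))
      = Submodule.comap T'.mulVecLin (suppSub k (Zset n s (n+1))) := by
    have h := Zch_cov φ T' (Wmat k n s) (Wmat k n s') hdet' hrel (n+1)
    rwa [Zch_Wmat hinj hs' (n+1), Zch_Wmat hinj hs (n+1)] at h
  have hY : suppSub k (Yset n s' (n+1))
      = Submodule.comap T'.mulVecLin (suppSub k (Yset n s (n+1))) := by
    have h := Ych_cov φ hφs T' (Wmat k n s) (Wmat k n s') hdet' hrel (n+1)
    rwa [Ych_Wmat hφs hs' (n+1), Ych_Wmat hφs hs (n+1)] at h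
  have hZY : suppSub k (Zset n s' (n+1) ∩ Yset n s' (n+1))
      = Submodule.comap T'.mulVecLin (suppSub k (Zset n s (n+1) ∩ Yset n s (n+1))) := by
    rw [← suppSub_inf, ← suppSub_inf, hZ, hY, ← Submodule.comap_inf]
  have e1 : Nat.card (Zset n s' (n+1)) = Nat.card (Zset n s (n+1)) := by
    rw [← suppSub_finrank (k := k), ← suppSub_finrank (k := k), hZ,
      finrank_comap T' hdet']
  have e2 : Nat.card (Zset n s' (n+1) ∩ Yset n s' (n+1) : Set (Fin (n+1)))
      = Nat.card (Zset n s (n+1) ∩ Yset n s (n+1) : Set (Fin (n+1))) := by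
    rw [← suppSub_finrank (k := k), ← suppSub_finrank (k := k), hZY,
      finrank_comap T' hdet']
  rw [card_Zfull hs', card_Zfull hs] at e1
  by_cases hpar : 2 ∣ (n - s) <;> by_cases hpar' : 2 ∣ (n - s')
  · rw [card_ZYfull_even hs' hpar', card_ZYfull_even hs hpar] at e2
    omega
  · rw [card_ZYfull_odd hs' hpar', card_ZYfull_even hs hpar] at e2
    omega
  · rw [card_ZYfull_even hs' hpar', card_ZYfull_odd hs hpar] at e2
    omega
  · rw [card_ZYfull_odd hs' hpar', card_ZYfull_odd hs hpar] at e2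
    omega
end

section
/- Let k be an algebraically closed field of characteristic p > 0 and q a power of p, n ≥ 2, 0 ≤ s < n, (n,s) ≠ (2,0). The hypersurface X_s ⊂ P^n defined by x_0^{q+1} + ... + x_{s-1}^{q+1} + x_s^q x_{s+1} + ... + x_{n-2}^q x_{n-1} + x_{n-1}^q x_n = 0 is rational: the projection from its unique singular point P_0 = (0:...:0:1) gives a birational map to P^{n-1}, with inverse (y_0:...:y_{n-1}) ↦ (y_0:...:y_{n-1}: -F_{q+1}(y_0,...,y_{n-1})/y_{n-1}^q) where F_{q+1} = x_0^{q+1}+...+x_{s-1}^{q+1}+x_s^q x_{s+1}+...+x_{n-2}^q x_{n-1}. -/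
/-!
Write a point of `𝔸^{n+1}` as `(y, c)` with `c = x_n`. Since `x_n` occurs in the form only in the
monomial `x_{n-1}^q x_n`, we have `F(y, c) = F(y, 0) + c · y_{n-1}^q`: the form is affine in the
last coordinate. So on the locus `y_{n-1} ≠ 0` the equation `F = 0` determines `c` uniquely, and
projecting away from `P₀` is a bijection onto `{y_{n-1} ≠ 0}` with the stated inverse.
-/

open Matrix

section AffineInLast

variable {k : Type*} [Field k] {n : ℕ}

theorem bijOn_init_invOn_snoc_of_affine_last {F : (Fin (n + 1) → k) → k} {a : (Fin n → k) → k}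
    {T : Set (Fin n → k)} (hF : ∀ y c, F (Fin.snoc y c) = F (Fin.snoc y 0) + c * a y)
    (ha : ∀ y ∈ T, a y ≠ 0) :
    Set.BijOn Fin.init {x | F x = 0 ∧ Fin.init x ∈ T} T ∧
      Set.InvOn (fun y => Fin.snoc y (-F (Fin.snoc y 0) / a y)) Fin.init
        {x | F x = 0 ∧ Fin.init x ∈ T} T := by
  have hinv : Set.InvOn (fun y => Fin.snoc y (-F (Fin.snoc y 0) / a y)) Fin.init
      {x | F x = 0 ∧ Fin.init x ∈ T} T := by
    refine ⟨fun x ⟨hx, hxT⟩ => ?_, fun y _ => Fin.init_snoc _ _⟩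
    have h0 : F (Fin.snoc (Fin.init x) 0) + x (Fin.last n) * a (Fin.init x) = 0 := by
      rw [← hF, Fin.snoc_init_self]
      exact hx
    have hlast : -F (Fin.snoc (Fin.init x) 0) / a (Fin.init x) = x (Fin.last n) := by
      rw [div_eq_iff (ha _ hxT)]
      linear_combination -h0
    change Fin.snoc (Fin.init x) _ = x
    rw [hlast, Fin.snoc_init_self]
  refine ⟨hinv.bijOn (fun x hx => hx.2) fun y hy => ⟨?_, ?_⟩, hinv⟩
  · change F (Fin.snoc y _) = 0
    rw [hF, div_mul_cancel₀ _ (ha y hy), add_neg_cancel]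
  · simpa only [Fin.init_snoc] using hy

end AffineInLast

section Snoc

variable {R m : Type*} [NonUnitalNonAssocSemiring R] {n : ℕ}

theorem snoc_dotProduct (y : Fin n → R) (c : R) (w : Fin (n + 1) → R) :
    Fin.snoc y c ⬝ᵥ w = y ⬝ᵥ Fin.init w + c * w (Fin.last n) := by
  simp only [dotProduct, Fin.sum_univ_castSucc, Fin.snoc_castSucc, Fin.snoc_last, Fin.init]

theorem mulVec_snoc_of_col_last_eq_zero {A : Matrix m (Fin (n + 1)) R}
    (hA : ∀ i, A i (Fin.last n) = 0) (v : Fin n → R) (c : R) :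
    A *ᵥ Fin.snoc v c = A *ᵥ Fin.snoc v 0 := by
  ext i
  simp only [mulVec, dotProduct, Fin.sum_univ_castSucc, Fin.snoc_castSucc, Fin.snoc_last, hA,
    mul_zero, zero_mul]

end Snoc

section Wmat

variable {k : Type*} [Field k] {n s : ℕ}

theorem Wmat_apply_last (hs : s < n) (i : Fin (n + 1)) : Wmat k n s i (Fin.last n) = 0 := by
  have := i.isLt
  simp only [Wmat, Fin.val_last]
  rw [if_neg (by omega), if_neg (by omega), add_zero]

theorem Wmat_last_apply (hs : s < n) (j : Fin (n + 1)) :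
    Wmat k n s (Fin.last n) j = if (j : ℕ) + 1 = n then 1 else 0 := by
  have := j.isLt
  simp only [Wmat, Fin.val_last, Fin.ext_iff]
  by_cases hj : (j : ℕ) + 1 = n
  · rw [if_neg (by omega), if_pos (by omega), if_pos hj, zero_add]
  · rw [if_neg (by omega), if_neg (by omega), if_neg hj, add_zero]

theorem Wmat_mulVec_last (hs : s < n) {i : Fin n} (hi : (i : ℕ) + 1 = n)
    (v : Fin (n + 1) → k) : (Wmat k n s *ᵥ v) (Fin.last n) = v i.castSucc := by
  simp only [mulVec, dotProduct, Wmat_last_apply hs, ite_mul, one_mul, zero_mul]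
  rw [Finset.sum_eq_single i.castSucc (fun j _ hj => if_neg fun h => hj (Fin.ext (by rw [Fin.val_castSucc]; omega)))
    (by simp), if_pos (by simpa using hi)]

theorem snoc_dotProduct_Wmat_mulVec_pow (q : ℕ) (hs : s < n) {i : Fin n} (hi : (i : ℕ) + 1 = n)
    (y : Fin n → k) (c : k) :
    let x : k → Fin (n + 1) → k := fun c => Fin.snoc y c
    x c ⬝ᵥ Wmat k n s *ᵥ (fun i => x c i ^ q) = x 0 ⬝ᵥ Wmat k n s *ᵥ (fun i => x 0 i ^ q) +
      c * y i ^ q := by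
  intro x
  have hpow : ∀ c : k, (fun i => x c i ^ q) = Fin.snoc (fun i => y i ^ q) (c ^ q) :=
    fun c => Fin.comp_snoc (· ^ q) y c
  rw [hpow, hpow, mulVec_snoc_of_col_last_eq_zero (Wmat_apply_last hs) _ (c ^ q),
    mulVec_snoc_of_col_last_eq_zero (Wmat_apply_last hs) _ (0 ^ q), snoc_dotProduct,
    snoc_dotProduct, Wmat_mulVec_last hs hi, Fin.snoc_castSucc, zero_mul, add_zero]

end Wmat

/-- Corollary 2: for `n ≥ 2`, `s < n`, `(n,s) ≠ (2,0)`, the hypersurface `X_s` is rational.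
The projection from the unique singular point `P₀ = (0:⋯:0:1)` (in coordinates, dropping
the last coordinate) is a bijection on the loci where `x_{n-1} ≠ 0`, with explicit inverse
`y ↦ (y, -F_{q+1}(y)/y_{n-1}^q)`; here `F_{q+1}(y) = F(y,0)`. -/
theorem Xs_rational (q n s : ℕ)
    (k : Type*) [Field k]
    (hs : s < n) :
    let F : (Fin (n + 1) → k) → k :=
      fun x => x ⬝ᵥ (Wmat k n s).mulVec (fun i => x i ^ q)
    let S : Set (Fin (n + 1) → k) := {x | F x = 0 ∧ x ⟨n - 1, by omega⟩ ≠ 0}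
    let T : Set (Fin n → k) := {y | y ⟨n - 1, by omega⟩ ≠ 0}
    let proj : (Fin (n + 1) → k) → (Fin n → k) := fun x i => x i.castSucc
    let ext : (Fin n → k) → (Fin (n + 1) → k) :=
      fun y => Fin.snoc y (-(F (Fin.snoc y 0)) / (y ⟨n - 1, by omega⟩) ^ q)
    Set.BijOn proj S T ∧ Set.InvOn ext proj S T := by
  intro F S T proj ext
  exact bijOn_init_invOn_snoc_of_affine_last (T := T)
    (snoc_dotProduct_Wmat_mulVec_pow q hs (i := ⟨n - 1, by omega⟩) (by dsimp only; omega)) fun y hy => pow_ne_zero q hy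
end

section
/- Let k be an algebraically closed field of characteristic p > 0 and q a power of p. The hypersurface X_s ⊂ P^n defined by x_0^{q+1} + ... + x_{s-1}^{q+1} + x_s^q x_{s+1} + ... + x_{n-2}^q x_{n-1} + x_{n-1}^q x_n = 0 (for 0 ≤ s ≤ n-1), or by x_0^{q+1}+...+x_{n-1}^{q+1} = 0 (for s = n), has exactly one singular point, namely P_0 = (0:...:0:1). -/
open Matrix

/-- The hypersurface `X_s` (with equation `∑ (W_s)_{ij} xᵢ xⱼ^q = 0`) has exactly one
singular point, namely `P₀ = (0:⋯:0:1)`: a nonzero `x` satisfies `W_s · x^{(q)} = 0`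
iff it is a nonzero scalar multiple of `(0,…,0,1)`. -/
theorem Xs_unique_singular_point (p q e n s : ℕ) (hp : p.Prime) (he : 0 < e)
    (hq : q = p ^ e) (k : Type*) [Field k] [IsAlgClosed k] [CharP k p]
    (hn : 1 ≤ n) (hs : s ≤ n) :
    ∀ x : Fin (n + 1) → k, x ≠ 0 →
      ((Wmat k n s).mulVec (fun i => x i ^ q) = 0 ↔
        ∃ c : k, c ≠ 0 ∧ x = fun i => if i = Fin.last n then c else 0) := by
  have hq0 : q ≠ 0 := by subst hq; exact (pow_pos hp.pos e).ne'
  intro x hx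
  constructor
  · intro h
    have key : ∀ i : Fin (n + 1), (i : ℕ) < n → x i = 0 := by
      intro i hi
      rcases lt_or_ge (i : ℕ) s with hcase | hcase
      · have hrow := congrFun h i
        simp only [mulVec, dotProduct, Pi.zero_apply] at hrow
        rw [Finset.sum_eq_single i] at hrow
        · simp only [Wmat] at hrow
          rw [if_pos (by exact ⟨by trivial, hcase⟩), if_neg (by omega)] at hrow
          have hxi : x i ^ q = 0 := by rw [← hrow]; ring
          exact pow_eq_zero_iff hq0 |>.mp hxi
        · intro j _ hj
          simp only [Wmat]
          rw [if_neg, if_neg]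
          · ring
          · rintro ⟨h1, h2⟩
            have : (i : ℕ) = (j : ℕ) + 1 := h1
            omega
          · rintro ⟨h1, _⟩
            exact hj h1.symm
        · intro hmem; exact absurd (Finset.mem_univ i) hmem
      · set i' : Fin (n + 1) := ⟨(i : ℕ) + 1, by omega⟩ with hi'
        have hrow := congrFun h i'
        simp only [mulVec, dotProduct, Pi.zero_apply] at hrow
        rw [Finset.sum_eq_single i] at hrow
        · simp only [Wmat] at hrow
          rw [if_neg, if_pos (by exact ⟨by trivial, hcase⟩)] at hrow
          · have hxi : x i ^ q = 0 := by rw [← hrow]; ring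
            exact pow_eq_zero_iff hq0 |>.mp hxi
          · rintro ⟨h1, h2⟩
            have : (i' : ℕ) = (i : ℕ) := congrArg Fin.val h1
            simp [hi'] at this
        · intro j _ hj
          simp only [Wmat]
          rw [if_neg, if_neg]
          · ring
          · rintro ⟨h1, h2⟩
            have h1' : (i : ℕ) + 1 = (j : ℕ) + 1 := h1
            exact hj (Fin.ext (by omega))
          · rintro ⟨h1, h2⟩
            have h1' : (i' : ℕ) = (j : ℕ) := congrArg Fin.val h1
            have : (i : ℕ) + 1 = (j : ℕ) := h1'
            omega
        · intro hmem; exact absurd (Finset.mem_univ i) hmem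
    refine ⟨x (Fin.last n), ?_, ?_⟩
    · intro hc
      apply hx
      funext i
      rcases lt_or_ge (i : ℕ) n with hi | hi
      · exact key i hi
      · have : i = Fin.last n := Fin.ext (by simpa using le_antisymm (Nat.lt_succ_iff.mp i.isLt) hi)
        rw [this]; exact hc
    · funext i
      by_cases hi : i = Fin.last n
      · simp [hi]
      · rw [if_neg hi]
        apply key
        have := i.isLt
        have : (i : ℕ) ≠ n := fun hh => hi (Fin.ext (by simpa using hh))
        omega
  · rintro ⟨c, hc, rfl⟩
    funext i
    simp only [mulVec, dotProduct, Pi.zero_apply]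
    apply Finset.sum_eq_zero
    intro j _
    by_cases hj : j = Fin.last n
    · subst hj
      have hW : Wmat k n s i (Fin.last n) = 0 := by
        simp only [Wmat]
        rw [if_neg, if_neg]
        · ring
        · rintro ⟨h1, _⟩
          have := i.isLt
          simp [Fin.last] at h1
          omega
        · rintro ⟨_, h2⟩
          simp [Fin.last] at h2
          omega
      rw [hW, zero_mul]
    · rw [if_neg hj, zero_pow hq0, mul_zero]
end

section
/- Let k be algebraically closed of characteristic p > 0 and q a power of p. The projective automorphism group of the hypersurface X_n ⊂ P^n defined by x_0^{q+1} + ... + x_{n-1}^{q+1} = 0 is the set of classes [M] ∈ PGL_{n+1}(k) of matrices M of block form ((T_n, 0),(u, 1)) where T_n ∈ GL_n(k) satisfies ᵗT_n T_n^(q) = λ I_n for some λ ≠ 0, and u is an arbitrary row vector of dimension n. -/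
open Matrix

/-- The matrix `W_n = diag(I_n, 0)`, associated with the hypersurface
`X_n : x₀^{q+1} + ⋯ + x_{n-1}^{q+1} = 0` in `Pⁿ`. -/
def Wn (k : Type*) [Field k] (n : ℕ) : Matrix (Fin (n + 1)) (Fin (n + 1)) k :=
  fun i j => if i = j ∧ (j : ℕ) < n then 1 else 0

/-- `Aut(X_n)`: an invertible matrix `M` represents a projective automorphism of `X_n`
(that is, `ᵗM W_n M^{(q)} = δ W_n` for some `δ ≠ 0`) iff, up to the scalar, `M` has the
block form `((T_n, 0), (u, 1))` with `ᵗT_n T_n^{(q)} = λ I_n`, `λ ≠ 0`, and `u` arbitrary: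
equivalently, the last column of `M` above the corner vanishes, the corner entry is
nonzero, and the upper-left `n × n` block `T` satisfies `ᵗT T^{(q)} = μ • 1` with `μ ≠ 0`. -/
theorem aut_Xn (p q e n : ℕ) (hp : p.Prime) (he : 0 < e) (hq : q = p ^ e)
    (k : Type*) [Field k] [IsAlgClosed k] [CharP k p] (hn : 1 ≤ n)
    (M : Matrix (Fin (n + 1)) (Fin (n + 1)) k) (hM : IsUnit M.det) :
    (∃ δ : k, δ ≠ 0 ∧ Mᵀ * Wn k n * M.map (fun x => x ^ q) = δ • Wn k n) ↔
      ((∀ i : Fin n, M i.castSucc (Fin.last n) = 0) ∧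
        M (Fin.last n) (Fin.last n) ≠ 0 ∧
        ∃ μ : k, μ ≠ 0 ∧
          (M.submatrix Fin.castSucc Fin.castSucc)ᵀ *
              (M.submatrix Fin.castSucc Fin.castSucc).map (fun x => x ^ q) =
            μ • (1 : Matrix (Fin n) (Fin n) k)) := by
  have hq0 : q ≠ 0 := hq ▸ pow_ne_zero e hp.ne_zero
  have key : ∀ i j, (Mᵀ * Wn k n * M.map (fun x => x ^ q)) i j
      = ∑ l : Fin n, M l.castSucc i * (M l.castSucc j) ^ q := by
    intro i j
    have h1 : ∀ x : Fin (n+1), (Mᵀ * Wn k n) i x = if (x:ℕ) < n then M x i else 0 := by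
      intro x
      by_cases hx : (x:ℕ) < n
      · simp [mul_apply, Wn, hx]
      · simp [mul_apply, Wn, hx]
    rw [mul_apply]
    simp only [h1, map_apply]
    rw [Fin.sum_univ_castSucc]
    simp [Fin.is_lt]
  constructor
  · rintro ⟨δ, hδ0, hδ⟩
    have hB : ∀ i j, ∑ l : Fin n, M l.castSucc i * (M l.castSucc j) ^ q
        = δ * Wn k n i j := by
      intro i j
      rw [← key, hδ]
      simp
    have hlast : ∀ i : Fin n, M i.castSucc (Fin.last n) = 0 := by
      set w : Fin (n+1) → k := fun l => if (l:ℕ) < n then (M l (Fin.last n))^q else 0 with hw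
      have hw0 : Mᵀ *ᵥ w = 0 := by
        funext i
        have h2 := hB i (Fin.last n)
        simp [Wn] at h2
        simpa [Matrix.mulVec, dotProduct, hw, Fin.sum_univ_castSucc, mul_ite,
          Fin.is_lt] using h2
      have hwz : w = 0 := by
        have hdet : IsUnit Mᵀ.det := by rwa [Matrix.det_transpose]
        calc w = (Mᵀ⁻¹ * Mᵀ) *ᵥ w := by rw [Matrix.nonsing_inv_mul _ hdet, Matrix.one_mulVec]
        _ = Mᵀ⁻¹ *ᵥ (Mᵀ *ᵥ w) := (Matrix.mulVec_mulVec _ _ _).symm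
        _ = 0 := by rw [hw0, Matrix.mulVec_zero]
      intro i
      have h3 := congrFun hwz i.castSucc
      simp [hw, Fin.is_lt] at h3
      exact h3.1
    have hcorner : M (Fin.last n) (Fin.last n) ≠ 0 := by
      intro h
      have hcol : ∀ i, M i (Fin.last n) = 0 := fun i => Fin.lastCases h hlast i
      have := Matrix.det_eq_zero_of_column_eq_zero (Fin.last n) hcol
      exact hM.ne_zero this
    refine ⟨hlast, hcorner, δ, hδ0, ?_⟩
    ext i j
    have h4 := hB i.castSucc j.castSucc
    simp only [Matrix.mul_apply, Matrix.transpose_apply, Matrix.map_apply,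
      Matrix.submatrix_apply]
    rw [h4]
    simp [Wn, Matrix.one_apply, Fin.is_lt, Fin.castSucc_inj, mul_ite]
  · rintro ⟨h0, hc, μ, hμ0, hT'⟩
    refine ⟨μ, hμ0, ?_⟩
    ext i j
    rw [key i j]
    refine Fin.lastCases ?_ (fun j' => ?_) j
    · simp [Wn, h0, zero_pow hq0]
    · refine Fin.lastCases ?_ (fun i' => ?_) i
      · simp [Wn, h0, (Fin.castSucc_lt_last j').ne']
      · have h5 := congrFun (congrFun hT' i') j'
        simp only [Matrix.mul_apply, Matrix.transpose_apply, Matrix.map_apply,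
          Matrix.submatrix_apply] at h5
        rw [h5]
        simp [Wn, Matrix.one_apply, Fin.is_lt, Fin.castSucc_inj, mul_ite]
end

section
/- Let k be algebraically closed of characteristic p > 0 and q a power of p, n ≥ 2. The projective automorphism group of the hypersurface X_{n-1} ⊂ P^n defined by x_0^{q+1} + ... + x_{n-2}^{q+1} + x_{n-1}^q x_n = 0 equals the set of classes [M] of block diagonal matrices M = diag(T_{n-1}, β, 1) with T_{n-1} ∈ GL_{n-1}(k), β ∈ k^×, satisfying ᵗT_{n-1} T_{n-1}^(q) = β^q I_{n-1}. -/
open Matrix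

/-!
The kernel of `W = diag(I_{n-1}, E_2)` is spanned by `e_n` and the kernel of `ᵗW` by `e_{n-1}`.
If `ᵗM W M^(q) = δ W` with `M` (hence `M^(q)`) invertible, then `M^(q)` preserves `ker W` and
`M` preserves `ker ᵗW`, so the last two columns of `M` vanish off the diagonal. Reading the
relation at the entries `(i, n-1)` and `(n, j)` then kills the rest of the last two rows, so
`M = diag(A, ν, μ)`; for such a matrix the relation says exactly `ᵗA A^(q) = δ I` and
`μ ν^q = δ`, and dividing by `μ` gives the normal form `μ · diag(T, β, 1)`.
-/

namespace Matrix

variable {ι R : Type*} [Fintype ι] [CommRing R]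

theorem transpose_smul_mul_map_pow_smul (c : R) (T : Matrix ι ι R) (q : ℕ) :
    (c • T)ᵀ * (c • T).map (· ^ q) = c ^ (q + 1) • (Tᵀ * T.map (· ^ q)) := by
  ext i j
  simp only [mul_apply, transpose_apply, map_apply, smul_apply, smul_eq_mul, Finset.mul_sum]
  exact Finset.sum_congr rfl fun a _ => by ring

variable [DecidableEq ι]

theorem det_map_pow_expChar_pow (p e : ℕ) [ExpChar R p] (M : Matrix ι ι R) :
    (M.map (· ^ p ^ e)).det = M.det ^ p ^ e :=
  ((iterateFrobenius R p e).map_det M).symm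

theorem isUnit_det_of_transpose_mul_eq_smul_one {A B : Matrix ι ι R} {c : R}
    (hc : IsUnit c) (h : Aᵀ * B = c • 1) : IsUnit A.det := by
  rw [← det_transpose]
  exact isUnit_det_of_right_inverse (B := ((hc.unit⁻¹ : Rˣ) : R) • B) (by
    rw [mul_smul_comm, h, smul_smul, hc.val_inv_mul, one_smul])

theorem diag_ne_zero_of_isUnit_det [Nontrivial R] {M : Matrix ι ι R} (hM : IsUnit M.det) {j : ι}
    (hj : ∀ a, a ≠ j → M a j = 0) : M j j ≠ 0 :=
  fun h0 => hM.ne_zero <| det_eq_zero_of_column_eq_zero j fun a => by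
    rcases eq_or_ne a j with rfl | ha
    exacts [h0, hj a ha]

theorem mulVec_mulVec_eq_zero_of_transpose_mul_mul_eq_smul {A B W : Matrix ι ι R} {δ : R}
    (hA : IsUnit A.det) (h : Aᵀ * W * B = δ • W) {x : ι → R} (hx : W *ᵥ x = 0) :
    W *ᵥ (B *ᵥ x) = 0 := by
  apply mulVec_injective_of_isUnit (A := Aᵀ) (by rwa [isUnit_iff_isUnit_det, det_transpose])
  rw [mulVec_mulVec, mulVec_mulVec, h, smul_mulVec, hx, smul_zero, mulVec_zero]

theorem vecMul_mulVec_eq_zero_of_transpose_mul_mul_eq_smul {A B W : Matrix ι ι R} {δ : R}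
    (hB : IsUnit B.det) (h : Aᵀ * W * B = δ • W) {x : ι → R} (hx : x ᵥ* W = 0) :
    (A *ᵥ x) ᵥ* W = 0 := by
  apply vecMul_injective_of_isUnit (A := B) ((isUnit_iff_isUnit_det B).2 hB)
  show (A *ᵥ x) ᵥ* W ᵥ* B = 0 ᵥ* B
  rw [← vecMul_transpose, vecMul_vecMul, vecMul_vecMul, ← Matrix.mul_assoc, h, vecMul_smul, hx,
    smul_zero, zero_vecMul]

end Matrix

namespace Fin

variable {N : ℕ}

theorem eq_castSucc_castSucc_or (i : Fin (N + 2)) :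
    (∃ a : Fin N, i = a.castSucc.castSucc) ∨ i = (last N).castSucc ∨ i = last (N + 1) := by
  rcases i.eq_castSucc_or_eq_last with ⟨i, rfl⟩ | rfl
  · rcases i.eq_castSucc_or_eq_last with ⟨a, rfl⟩ | rfl
    · exact .inl ⟨a, rfl⟩
    · exact .inr (.inl rfl)
  · exact .inr (.inr rfl)

@[simp]
theorem last_ne_castSucc_last : last (N + 1) ≠ (last N).castSucc := (castSucc_ne_last _).symm

@[simp]
theorem val_ne_self (a : Fin N) : (a : ℕ) ≠ N := a.is_lt.ne

@[simp]
theorem val_ne_add_one (a : Fin N) : (a : ℕ) ≠ N + 1 := by omega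

end Fin

section Wmat

variable {k : Type*} [Field k] {N : ℕ}

@[simp]
theorem Wmat_castSucc_castSucc (a : Fin N) (j : Fin (N + 2)) :
    Wmat k (N + 1) N a.castSucc.castSucc j = if a.castSucc.castSucc = j then 1 else 0 := by
  simp only [Wmat, Fin.ext_iff, Fin.val_castSucc]
  have := j.isLt
  split_ifs <;> first | omega | simp_all

@[simp]
theorem Wmat_last_castSucc (j : Fin (N + 2)) : Wmat k (N + 1) N (Fin.last N).castSucc j = 0 := by
  simp only [Wmat, Fin.ext_iff, Fin.val_castSucc, Fin.val_last]
  have := j.isLt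
  split_ifs <;> first | omega | simp_all

@[simp]
theorem Wmat_last (j : Fin (N + 2)) :
    Wmat k (N + 1) N (Fin.last (N + 1)) j = if j = (Fin.last N).castSucc then 1 else 0 := by
  simp only [Wmat, Fin.ext_iff, Fin.val_castSucc, Fin.val_last]
  have := j.isLt
  split_ifs <;> first | omega | simp_all

theorem transpose_mul_Wmat_mul_apply (A B : Matrix (Fin (N + 2)) (Fin (N + 2)) k)
    (i j : Fin (N + 2)) :
    (Aᵀ * Wmat k (N + 1) N * B) i j =
      ∑ a : Fin N, A a.castSucc.castSucc i * B a.castSucc.castSucc j +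
        A (Fin.last (N + 1)) i * B (Fin.last N).castSucc j := by
  simp [Matrix.mul_apply, Fin.sum_univ_castSucc]

theorem Wmat_mulVec_eq_zero_iff {y : Fin (N + 2) → k} :
    Wmat k (N + 1) N *ᵥ y = 0 ↔ ∀ a, a ≠ Fin.last (N + 1) → y a = 0 := by
  simp only [funext_iff, Pi.zero_apply]
  refine ⟨fun h a ha => ?_, fun h i => ?_⟩
  · rcases a.eq_castSucc_castSucc_or with ⟨a, rfl⟩ | rfl | rfl
    · simpa [mulVec, dotProduct] using h a.castSucc.castSucc
    · simpa [mulVec, dotProduct] using h (Fin.last (N + 1))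
    · exact absurd rfl ha
  · rcases i.eq_castSucc_castSucc_or with ⟨a, rfl⟩ | rfl | rfl
    · simpa [mulVec, dotProduct] using h _ (Fin.castSucc_ne_last _)
    · simp [mulVec, dotProduct]
    · simpa [mulVec, dotProduct] using h _ (Fin.castSucc_ne_last _)

theorem vecMul_Wmat_eq_zero_iff {y : Fin (N + 2) → k} :
    y ᵥ* Wmat k (N + 1) N = 0 ↔ ∀ a, a ≠ (Fin.last N).castSucc → y a = 0 := by
  simp only [funext_iff, Pi.zero_apply]
  refine ⟨fun h a ha => ?_, fun h j => ?_⟩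
  · rcases a.eq_castSucc_castSucc_or with ⟨a, rfl⟩ | rfl | rfl
    · simpa [vecMul, dotProduct, Fin.sum_univ_castSucc] using h a.castSucc.castSucc
    · exact absurd rfl ha
    · simpa [vecMul, dotProduct, Fin.sum_univ_castSucc] using h (Fin.last N).castSucc
  · simp [vecMul, dotProduct, Fin.sum_univ_castSucc, h]

end Wmat

section diagBlock

variable {k : Type*} [Field k] {N : ℕ}

def diagBlock (T : Matrix (Fin N) (Fin N) k) (β γ : k) : Matrix (Fin (N + 2)) (Fin (N + 2)) k :=
  fun i j =>
    if h : (i : ℕ) < N ∧ (j : ℕ) < N then T ⟨i, h.1⟩ ⟨j, h.2⟩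
    else if (i : ℕ) = N ∧ (j : ℕ) = N then β
    else if (i : ℕ) = N + 1 ∧ (j : ℕ) = N + 1 then γ
    else 0

theorem diagBlock_map (T : Matrix (Fin N) (Fin N) k) (β γ : k) {f : k → k} (hf : f 0 = 0) :
    (diagBlock T β γ).map f = diagBlock (T.map f) (f β) (f γ) := by
  ext i j
  simp only [diagBlock, map_apply]
  split_ifs <;> simp [hf]

theorem smul_diagBlock (c : k) (T : Matrix (Fin N) (Fin N) k) (β γ : k) :
    c • diagBlock T β γ = diagBlock (c • T) (c * β) (c * γ) := by
  ext i j
  simp only [diagBlock, Matrix.smul_apply, smul_eq_mul]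
  split_ifs <;> simp

theorem transpose_diagBlock_mul_Wmat_mul_diagBlock_eq_smul_iff {A B : Matrix (Fin N) (Fin N) k}
    {ν μ ν' μ' δ : k} :
    (diagBlock A ν μ)ᵀ * Wmat k (N + 1) N * diagBlock B ν' μ' = δ • Wmat k (N + 1) N ↔
      Aᵀ * B = δ • 1 ∧ μ * ν' = δ := by
  simp only [← Matrix.ext_iff, transpose_mul_Wmat_mul_apply, Matrix.smul_apply, smul_eq_mul]
  refine ⟨fun h => ⟨fun a b => ?_, ?_⟩, fun ⟨hAB, hμν⟩ i j => ?_⟩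
  · simpa [diagBlock, mul_apply, one_apply] using h a.castSucc.castSucc b.castSucc.castSucc
  · simpa [diagBlock] using h (Fin.last (N + 1)) (Fin.last N).castSucc
  · rcases i.eq_castSucc_castSucc_or with ⟨a, rfl⟩ | rfl | rfl <;>
    rcases j.eq_castSucc_castSucc_or with ⟨b, rfl⟩ | rfl | rfl <;>
    simp [diagBlock, hμν]
    simpa [mul_apply, one_apply] using hAB a b

end diagBlock

section Automorphisms

variable {k : Type*} [Field k] {N : ℕ}

theorem eq_diagBlock_of_forall_ne {M : Matrix (Fin (N + 2)) (Fin (N + 2)) k}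
    (hcolu : ∀ a, a ≠ (Fin.last N).castSucc → M a (Fin.last N).castSucc = 0)
    (hcolv : ∀ a, a ≠ Fin.last (N + 1) → M a (Fin.last (N + 1)) = 0)
    (hrowu : ∀ j, j ≠ (Fin.last N).castSucc → M (Fin.last N).castSucc j = 0)
    (hrowv : ∀ j, j ≠ Fin.last (N + 1) → M (Fin.last (N + 1)) j = 0) :
    M = diagBlock (M.submatrix (·.castSucc.castSucc) (·.castSucc.castSucc))
      (M (Fin.last N).castSucc (Fin.last N).castSucc)
      (M (Fin.last (N + 1)) (Fin.last (N + 1))) := by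
  ext i j
  rcases i.eq_castSucc_castSucc_or with ⟨a, rfl⟩ | rfl | rfl <;>
  rcases j.eq_castSucc_castSucc_or with ⟨b, rfl⟩ | rfl | rfl <;>
  simp [diagBlock, hcolu, hcolv, hrowu, hrowv]

theorem exists_eq_diagBlock_of_transpose_mul_Wmat_mul_map_eq_smul {q : ℕ} (hq : q ≠ 0)
    {M : Matrix (Fin (N + 2)) (Fin (N + 2)) k} {δ : k} (hM : IsUnit M.det)
    (hM' : IsUnit (M.map (· ^ q)).det)
    (h : Mᵀ * Wmat k (N + 1) N * M.map (· ^ q) = δ • Wmat k (N + 1) N) :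
    ∃ A ν μ, M = diagBlock A ν μ := by
  have hcolv : ∀ a, a ≠ Fin.last (N + 1) → M a (Fin.last (N + 1)) = 0 := by
    have := mulVec_mulVec_eq_zero_of_transpose_mul_mul_eq_smul hM h
      (x := Pi.single (Fin.last (N + 1)) 1)
      (Wmat_mulVec_eq_zero_iff.2 fun a ha => Pi.single_eq_of_ne ha 1)
    rw [mulVec_single_one, Wmat_mulVec_eq_zero_iff] at this
    exact fun a ha => pow_eq_zero_iff hq |>.1 (this a ha)
  have hcolu : ∀ a, a ≠ (Fin.last N).castSucc → M a (Fin.last N).castSucc = 0 := by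
    have := vecMul_mulVec_eq_zero_of_transpose_mul_mul_eq_smul hM' h
      (x := Pi.single (Fin.last N).castSucc 1)
      (vecMul_Wmat_eq_zero_iff.2 fun a ha => Pi.single_eq_of_ne ha 1)
    rwa [mulVec_single_one, vecMul_Wmat_eq_zero_iff] at this
  have hν := diag_ne_zero_of_isUnit_det hM hcolu
  have hμ := diag_ne_zero_of_isUnit_det hM hcolv
  have key i j := congrFun (congrFun h i) j
  simp only [transpose_mul_Wmat_mul_apply, Matrix.smul_apply, smul_eq_mul, map_apply] at key
  have hrowv : ∀ j, j ≠ Fin.last (N + 1) → M (Fin.last (N + 1)) j = 0 := by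
    intro j hj
    rcases j.eq_castSucc_castSucc_or with ⟨b, rfl⟩ | rfl | rfl
    · simpa [hcolu, hq, hν] using key b.castSucc.castSucc (Fin.last N).castSucc
    · exact hcolu _ Fin.last_ne_castSucc_last
    · exact absurd rfl hj
  have hrowu : ∀ j, j ≠ (Fin.last N).castSucc → M (Fin.last N).castSucc j = 0 := by
    intro j hj
    simpa [hcolv, hq, hμ, hj] using key (Fin.last (N + 1)) j
  exact ⟨_, _, _, eq_diagBlock_of_forall_ne hcolu hcolv hrowu hrowv⟩

theorem transpose_mul_Wmat_mul_map_eq_smul_iff {q : ℕ} (hq : q ≠ 0)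
    {M : Matrix (Fin (N + 2)) (Fin (N + 2)) k} {δ : k} (hM : IsUnit M.det)
    (hM' : IsUnit (M.map (· ^ q)).det) :
    Mᵀ * Wmat k (N + 1) N * M.map (· ^ q) = δ • Wmat k (N + 1) N ↔
      ∃ A ν μ, M = diagBlock A ν μ ∧ Aᵀ * A.map (· ^ q) = δ • 1 ∧ μ * ν ^ q = δ := by
  constructor
  · intro h
    obtain ⟨A, ν, μ, rfl⟩ := exists_eq_diagBlock_of_transpose_mul_Wmat_mul_map_eq_smul hq hM hM' h
    rw [diagBlock_map _ _ _ (zero_pow hq), transpose_diagBlock_mul_Wmat_mul_diagBlock_eq_smul_iff]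
      at h
    exact ⟨A, ν, μ, rfl, h⟩
  · rintro ⟨A, ν, μ, rfl, hA, hμν⟩
    rw [diagBlock_map _ _ _ (zero_pow hq), transpose_diagBlock_mul_Wmat_mul_diagBlock_eq_smul_iff]
    exact ⟨hA, hμν⟩

theorem exists_eq_diagBlock_iff_exists_eq_smul_diagBlock {q : ℕ} (hq : q ≠ 0)
    {M : Matrix (Fin (N + 2)) (Fin (N + 2)) k} :
    (∃ δ : k, δ ≠ 0 ∧
        ∃ A ν μ, M = diagBlock A ν μ ∧ Aᵀ * A.map (· ^ q) = δ • 1 ∧ μ * ν ^ q = δ) ↔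
      ∃ (c β : k) (T : Matrix (Fin N) (Fin N) k), c ≠ 0 ∧ β ≠ 0 ∧ IsUnit T.det ∧
        Tᵀ * T.map (· ^ q) = β ^ q • 1 ∧ M = c • diagBlock T β 1 := by
  simp_rw [smul_diagBlock, mul_one]
  constructor
  · rintro ⟨δ, hδ, A, ν, μ, rfl, hA, hμν⟩
    have hμ : μ ≠ 0 := left_ne_zero_of_mul (hμν ▸ hδ)
    have hν : ν ≠ 0 := (pow_ne_zero_iff hq).1 (right_ne_zero_of_mul (hμν ▸ hδ))
    have hT : (μ⁻¹ • A)ᵀ * (μ⁻¹ • A).map (· ^ q) = (μ⁻¹ * ν) ^ q • 1 := by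
      rw [transpose_smul_mul_map_pow_smul, hA, smul_smul, ← hμν]
      congr 1
      rw [pow_succ, mul_pow]
      field_simp
    refine ⟨μ, μ⁻¹ * ν, μ⁻¹ • A, hμ, by simp [hμ, hν],
      isUnit_det_of_transpose_mul_eq_smul_one (by simp [hμ, hν]) hT, hT, ?_⟩
    rw [smul_inv_smul₀ hμ, mul_inv_cancel_left₀ hμ]
  · rintro ⟨c, β, T, hc, hβ, -, hT, rfl⟩
    refine ⟨c ^ (q + 1) * β ^ q, by simp [hc, hβ], c • T, c * β, c, rfl, ?_, by ring⟩
    rw [transpose_smul_mul_map_pow_smul, hT, smul_smul]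

end Automorphisms

theorem aut_Xn_minus_one_general (p q e n : ℕ) (hp : p.Prime) (hq : q = p ^ e)
    (k : Type*) [Field k] [CharP k p] (hn : 2 ≤ n)
    (M : Matrix (Fin (n + 1)) (Fin (n + 1)) k) (hM : IsUnit M.det) :
    (∃ δ : k, δ ≠ 0 ∧
        Mᵀ * Wmat k n (n - 1) * M.map (fun x => x ^ q) = δ • Wmat k n (n - 1)) ↔
      (∃ (c β : k) (T : Matrix (Fin (n - 1)) (Fin (n - 1)) k),
        c ≠ 0 ∧ β ≠ 0 ∧ IsUnit T.det ∧
        Tᵀ * T.map (fun x => x ^ q) = β ^ q • (1 : Matrix (Fin (n - 1)) (Fin (n - 1)) k) ∧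
        ∀ i j : Fin (n + 1), M i j =
          c * (if h : (i : ℕ) < n - 1 ∧ (j : ℕ) < n - 1 then T ⟨i, h.1⟩ ⟨j, h.2⟩
            else if (i : ℕ) = n - 1 ∧ (j : ℕ) = n - 1 then β
            else if (i : ℕ) = n ∧ (j : ℕ) = n then 1
            else 0)) := by
  obtain ⟨N, rfl⟩ : ∃ N, n = N + 1 := ⟨n - 1, by omega⟩
  have := Fact.mk hp
  have hq0 : q ≠ 0 := hq ▸ pow_ne_zero e hp.ne_zero
  have hM' : IsUnit (M.map (· ^ q)).det := by
    rw [hq, det_map_pow_expChar_pow]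
    exact hM.pow _
  change (∃ δ : k, δ ≠ 0 ∧ Mᵀ * Wmat k (N + 1) N * M.map (· ^ q) = δ • Wmat k (N + 1) N) ↔
    ∃ (c β : k) (T : Matrix (Fin N) (Fin N) k), c ≠ 0 ∧ β ≠ 0 ∧ IsUnit T.det ∧
      Tᵀ * T.map (· ^ q) = β ^ q • 1 ∧ ∀ i j, M i j = (c • diagBlock T β 1) i j
  simp_rw [Matrix.ext_iff, transpose_mul_Wmat_mul_map_eq_smul_iff hq0 hM hM']
  exact exists_eq_diagBlock_iff_exists_eq_smul_diagBlock hq0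

/-- `Aut(X_{n-1})`: an invertible matrix `M` represents a projective automorphism of
`X_{n-1} : x₀^{q+1} + ⋯ + x_{n-2}^{q+1} + x_{n-1}^q x_n = 0` iff `M` is a scalar `c`
times a block diagonal matrix `diag(T_{n-1}, β, 1)` with `T_{n-1} ∈ GL_{n-1}(k)`,
`β ≠ 0`, and `ᵗT_{n-1} T_{n-1}^{(q)} = β^q I_{n-1}`. -/
theorem aut_Xn_minus_one (p q e n : ℕ) (hp : p.Prime) (he : 0 < e) (hq : q = p ^ e)
    (k : Type*) [Field k] [IsAlgClosed k] [CharP k p] (hn : 2 ≤ n)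
    (M : Matrix (Fin (n + 1)) (Fin (n + 1)) k) (hM : IsUnit M.det) :
    (∃ δ : k, δ ≠ 0 ∧
        Mᵀ * Wmat k n (n - 1) * M.map (fun x => x ^ q) = δ • Wmat k n (n - 1)) ↔
      (∃ (c β : k) (T : Matrix (Fin (n - 1)) (Fin (n - 1)) k),
        c ≠ 0 ∧ β ≠ 0 ∧ IsUnit T.det ∧
        Tᵀ * T.map (fun x => x ^ q) = β ^ q • (1 : Matrix (Fin (n - 1)) (Fin (n - 1)) k) ∧
        ∀ i j : Fin (n + 1), M i j =
          c * (if h : (i : ℕ) < n - 1 ∧ (j : ℕ) < n - 1 then T ⟨i, h.1⟩ ⟨j, h.2⟩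
            else if (i : ℕ) = n - 1 ∧ (j : ℕ) = n - 1 then β
            else if (i : ℕ) = n ∧ (j : ℕ) = n then 1
            else 0)) :=
  aut_Xn_minus_one_general p q e n hp hq k hn M hM
end

section
/- Let k be an algebraically closed field of characteristic p > 0, q a power of p, and A ∈ M_3(k) of rank 2. Then the plane curve X_A ⊂ P^2 defined by ∑ a_ij x_i x_j^q = 0 is projectively isomorphic to exactly one of: X_0 : x_0^q x_1 + x_1^q x_2 = 0, X_1 : x_0^{q+1} + x_1^q x_2 = 0, X_2 : x_0^{q+1} + x_1^{q+1} = 0. -/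
/-!
`ProjIso q A B` says that `B` is, up to a scalar, the Gram matrix `Tᵀ A T^(q)` of the form
`⟪x, y⟫ = x ⬝ A y^(q)` on a basis (the columns of `T`). This form is linear in `x` and
`q`-semilinear in `y`, so it has a left radical `L` and a right radical `R`, each a line when
`rank A = 2`. Two invariants separate the three normal forms: whether `L` and `R` meet (only
for `X₂`) and whether `⟪R, L⟫ ≠ 0` (only for `X₁`).

Conversely, let `L = k w` and `R = k u`. If `L = R`, the form is nondegenerate on a complement
of `u`; there it has a hyperbolic pair `t, s` (`⟪t, t⟫ = ⟪s, s⟫ = 0`, `⟪t, s⟫ = ⟪s, t⟫ = μ`),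
and for `x^q + x = 1`, `β^(q+1) = -1` the vectors `x t + s`, `β ((x - 1) t + s)`, `u` give
`μ X₂`. If `L ≠ R` and `⟪u, w⟫ = 0`, an isotropic `t` with `⟪t, w⟫ = ⟪u, t⟫ = μ` gives
`μ X₀` on `w, t, u`. If `⟪u, w⟫ ≠ 0`, a vector `t` with `⟪t, w⟫ = ⟪u, t⟫ = 0` gives `X₁` on
`t, w, u` after rescaling `u`. Every root needed exists since `k` is algebraically closed
and `q > 1`.
-/

open Matrix

/-- `A ∼ λB` for some scalar `λ ≠ 0`: the curves `X_A` and `X_B` are projectively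
isomorphic. -/
def ProjIso {k : Type*} [Field k] (q : ℕ) (A B : Matrix (Fin 3) (Fin 3) k) : Prop :=
  ∃ (T : Matrix (Fin 3) (Fin 3) k) (lam : k), IsUnit T.det ∧ lam ≠ 0 ∧
    Tᵀ * A * T.map (fun x => x ^ q) = lam • B

section
variable {k : Type*} [Field k]

namespace Matrix

variable {m n ι : Type*} [Fintype n] (A : Matrix n n k) (q : ℕ)

def twistedForm (x y : n → k) : k := x ⬝ᵥ A *ᵥ y ^ q

def twistedGram (t : ι → n → k) : Matrix ι ι k := of fun i j => A.twistedForm q (t i) (t j)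

def leftRadical : Set (n → k) := {x | ∀ y, A.twistedForm q x y = 0}

def rightRadical : Set (n → k) := {y | ∀ x, A.twistedForm q x y = 0}

def RadicalsMeet : Prop := ∃ x ≠ 0, x ∈ A.leftRadical q ∧ x ∈ A.rightRadical q

def RadicalsPair : Prop :=
  ∃ x ∈ A.leftRadical q, ∃ y ∈ A.rightRadical q, A.twistedForm q y x ≠ 0

variable {A q}

section Linearity
variable {x x' y y' : n → k}

@[simp]
theorem twistedForm_add_left :
    A.twistedForm q (x + x') y = A.twistedForm q x y + A.twistedForm q x' y :=
  add_dotProduct ..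

@[simp]
theorem twistedForm_smul_left (c : k) : A.twistedForm q (c • x) y = c * A.twistedForm q x y :=
  smul_dotProduct ..

@[simp]
theorem twistedForm_smul_right (c : k) :
    A.twistedForm q x (c • y) = c ^ q * A.twistedForm q x y := by
  rw [twistedForm, smul_pow, mulVec_smul, dotProduct_smul, smul_eq_mul, twistedForm]

@[simp]
theorem twistedForm_add_right {p e : ℕ} [ExpChar k p] :
    A.twistedForm (p ^ e) x (y + y') = A.twistedForm (p ^ e) x y + A.twistedForm (p ^ e) x y' := by
  have hfrob : (y + y') ^ p ^ e = y ^ p ^ e + y' ^ p ^ e :=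
    funext fun i => add_pow_expChar_pow (y i) (y' i) p e
  rw [twistedForm, hfrob, mulVec_add, dotProduct_add, twistedForm, twistedForm]

@[simp]
theorem twistedForm_smul_matrix (c : k) : (c • A).twistedForm q x y = c * A.twistedForm q x y := by
  rw [twistedForm, smul_mulVec, dotProduct_smul, smul_eq_mul, twistedForm]

theorem twistedForm_smul_add_smul_add {p e : ℕ} [ExpChar k p] (a b : k) (t s : n → k) :
    A.twistedForm (p ^ e) (a • t + s) (b • t + s) =
      a * b ^ p ^ e * A.twistedForm (p ^ e) t t + a * A.twistedForm (p ^ e) t s +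
        b ^ p ^ e * A.twistedForm (p ^ e) s t + A.twistedForm (p ^ e) s s := by
  simp only [twistedForm_add_left, twistedForm_add_right, twistedForm_smul_left,
    twistedForm_smul_right]
  ring

end Linearity

section Radicals
variable [DecidableEq n] {x y : n → k}

theorem mem_leftRadical_iff (hq : q ≠ 0) : x ∈ A.leftRadical q ↔ x ᵥ* A = 0 := by
  refine ⟨fun hx => funext fun j => ?_, fun hx y => ?_⟩
  · have hsingle : (Pi.single j 1 : n → k) ^ q = Pi.single j 1 := by
      ext i; rcases eq_or_ne i j with rfl | h <;> simp [*]
    exact (by simpa [twistedForm, hsingle] using hx (Pi.single j 1) : x ⬝ᵥ A.col j = 0)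
  · rw [twistedForm, dotProduct_mulVec, hx, zero_dotProduct]

theorem mem_rightRadical_iff : y ∈ A.rightRadical q ↔ A *ᵥ y ^ q = 0 := by
  refine ⟨fun hy => funext fun i => ?_, fun hy x => ?_⟩
  · simpa [twistedForm] using hy (Pi.single i 1)
  · rw [twistedForm, hy, dotProduct_zero]

end Radicals

theorem eq_zero_of_not_radicalsMeet (h : ¬A.RadicalsMeet q) {c : n → k}
    (hL : c ∈ A.leftRadical q) (hR : c ∈ A.rightRadical q) : c = 0 := by
  by_contra hc
  exact h ⟨c, hc, hL, hR⟩

section Scalar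
variable {c : k} (hc : c ≠ 0)
include hc

theorem leftRadical_smul : (c • A).leftRadical q = A.leftRadical q := by
  ext x; simp [leftRadical, hc]

theorem rightRadical_smul : (c • A).rightRadical q = A.rightRadical q := by
  ext x; simp [rightRadical, hc]

theorem radicalsMeet_smul_iff : (c • A).RadicalsMeet q ↔ A.RadicalsMeet q := by
  simp only [RadicalsMeet, leftRadical_smul hc, rightRadical_smul hc]

theorem radicalsPair_smul_iff : (c • A).RadicalsPair q ↔ A.RadicalsPair q := by
  simp [RadicalsPair, leftRadical_smul hc, rightRadical_smul hc, hc]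

end Scalar

section Frobenius
variable {p e : ℕ} [ExpChar k p]

theorem pow_dotProduct_pow (x y : n → k) : x ^ p ^ e ⬝ᵥ y ^ p ^ e = (x ⬝ᵥ y) ^ p ^ e :=
  (RingHom.map_dotProduct (iterateFrobenius k p e) x y).symm

theorem map_pow_mulVec_pow (M : Matrix m n k) (y : n → k) :
    M.map (· ^ p ^ e) *ᵥ y ^ p ^ e = (M *ᵥ y) ^ p ^ e :=
  funext fun i => (RingHom.map_mulVec (iterateFrobenius k p e) M y i).symm

theorem twistedForm_transpose_mul_mul_map (T : Matrix n n k) (x y : n → k) :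
    (Tᵀ * A * T.map (· ^ p ^ e)).twistedForm (p ^ e) x y =
      A.twistedForm (p ^ e) (T *ᵥ x) (T *ᵥ y) := by
  rw [twistedForm, twistedForm, ← mulVec_mulVec, ← mulVec_mulVec, map_pow_mulVec_pow,
    dotProduct_mulVec, vecMul_transpose]

variable [DecidableEq n] {T : Matrix n n k} (hT : IsUnit T)
include hT

theorem mem_leftRadical_transpose_mul_mul_map {x : n → k} :
    x ∈ (Tᵀ * A * T.map (· ^ p ^ e)).leftRadical (p ^ e) ↔ T *ᵥ x ∈ A.leftRadical (p ^ e) := by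
  simp only [leftRadical, Set.mem_ofPred_eq, twistedForm_transpose_mul_mul_map]
  refine ⟨fun h y => ?_, fun h y => h _⟩
  obtain ⟨y, rfl⟩ := mulVec_surjective_iff_isUnit.mpr hT y
  exact h y

theorem mem_rightRadical_transpose_mul_mul_map {y : n → k} :
    y ∈ (Tᵀ * A * T.map (· ^ p ^ e)).rightRadical (p ^ e) ↔ T *ᵥ y ∈ A.rightRadical (p ^ e) := by
  simp only [rightRadical, Set.mem_ofPred_eq, twistedForm_transpose_mul_mul_map]
  refine ⟨fun h x => ?_, fun h x => h _⟩
  obtain ⟨x, rfl⟩ := mulVec_surjective_iff_isUnit.mpr hT x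
  exact h x

theorem radicalsMeet_transpose_mul_mul_map_iff :
    (Tᵀ * A * T.map (· ^ p ^ e)).RadicalsMeet (p ^ e) ↔ A.RadicalsMeet (p ^ e) := by
  have hinj := mulVec_injective_iff_isUnit.mpr hT
  simp only [RadicalsMeet, mem_leftRadical_transpose_mul_mul_map hT,
    mem_rightRadical_transpose_mul_mul_map hT]
  constructor
  · rintro ⟨x, hx, hL, hR⟩
    exact ⟨T *ᵥ x, (hinj.ne_iff' (mulVec_zero T)).mpr hx, hL, hR⟩
  · rintro ⟨y, hy, hL, hR⟩
    obtain ⟨x, rfl⟩ := mulVec_surjective_iff_isUnit.mpr hT y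
    exact ⟨x, (hinj.ne_iff' (mulVec_zero T)).mp hy, hL, hR⟩

theorem radicalsPair_transpose_mul_mul_map_iff :
    (Tᵀ * A * T.map (· ^ p ^ e)).RadicalsPair (p ^ e) ↔ A.RadicalsPair (p ^ e) := by
  have hsurj := mulVec_surjective_iff_isUnit.mpr hT
  simp only [RadicalsPair, mem_leftRadical_transpose_mul_mul_map hT,
    mem_rightRadical_transpose_mul_mul_map hT, twistedForm_transpose_mul_mul_map]
  constructor
  · rintro ⟨x, hx, y, hy, hxy⟩
    exact ⟨_, hx, _, hy, hxy⟩
  · rintro ⟨x, hx, y, hy, hxy⟩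
    obtain ⟨x, rfl⟩ := hsurj x
    obtain ⟨y, rfl⟩ := hsurj y
    exact ⟨x, hx, y, hy, hxy⟩

end Frobenius

section Gram

theorem twistedGram_eq (t : ι → n → k) :
    A.twistedGram q t = of t * A * (of t)ᵀ.map (· ^ q) := by
  ext i j
  simp only [twistedGram, twistedForm, dotProduct, mulVec, Pi.pow_apply, Finset.mul_sum, of_apply,
    mul_apply, map_apply, transpose_apply, Finset.sum_mul, mul_assoc]
  exact Finset.sum_comm

variable [Fintype ι] [DecidableEq ι] {p e : ℕ} [ExpChar k p] {t : ι → n → k}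

theorem mem_radicals_twistedGram {c : ι → k} (hc : c ᵥ* of t = 0) :
    c ∈ (A.twistedGram (p ^ e) t).leftRadical (p ^ e) ∧
      c ∈ (A.twistedGram (p ^ e) t).rightRadical (p ^ e) := by
  rw [mem_leftRadical_iff (expChar_pow_pos k p e).ne', mem_rightRadical_iff, twistedGram_eq]
  refine ⟨by rw [← vecMul_vecMul, ← vecMul_vecMul, hc, zero_vecMul, zero_vecMul], ?_⟩
  rw [← mulVec_mulVec, ← mulVec_mulVec, map_pow_mulVec_pow, mulVec_transpose, hc,
    zero_pow (expChar_pow_pos k p e).ne', mulVec_zero, mulVec_zero]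

theorem linearIndependent_of_twistedGram {G : Matrix ι ι k} (hG : A.twistedGram (p ^ e) t = G)
    (i₀ : ι) (ht : t i₀ ≠ 0)
    (h : ∀ c ∈ G.leftRadical (p ^ e), c ∈ G.rightRadical (p ^ e) → ∀ i ≠ i₀, c i = 0) :
    LinearIndependent k t := by
  rw [Fintype.linearIndependent_iff]
  intro c hc
  obtain ⟨hL, hR⟩ := hG ▸ mem_radicals_twistedGram (A := A) (p := p) (e := e) (t := t) (c := c)
    (by rwa [vecMul_eq_sum])
  have hc₀ : c i₀ • t i₀ = 0 := by
    rwa [Finset.sum_eq_single i₀ (fun i _ hi => by rw [h c hL hR i hi, zero_smul]) (by simp)]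
      at hc
  intro i
  rcases eq_or_ne i i₀ with rfl | hi
  · exact (smul_eq_zero.mp hc₀).resolve_right ht
  · exact h c hL hR i hi

theorem mem_rightRadical_of_linearIndependent {t : n → n → k} (ht : LinearIndependent k t)
    {y : n → k} (h : ∀ i, A.twistedForm q (t i) y = 0) : y ∈ A.rightRadical q := by
  intro x
  have hx : x ∈ Submodule.span k (Set.range t) := by
    rw [ht.span_eq_top_of_card_eq_finrank' (by simp)]; trivial
  obtain ⟨c, rfl⟩ := (Submodule.mem_span_range_iff_exists_fun k).mp hx
  have hsum : ∑ i, c i • t i = c ᵥ* of t := (vecMul_eq_sum c (of t)).symm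
  have hcol : of t *ᵥ (A *ᵥ y ^ q) = 0 := funext h
  rw [twistedForm, hsum, ← dotProduct_mulVec, hcol, dotProduct_zero]

end Gram

section RankTwo
variable (hA : A.rank + 1 = Fintype.card n)
include hA

theorem exists_ker_eq_span_of_rank_add_one : ∃ v ≠ 0, ∀ x, A *ᵥ x = 0 ↔ x ∈ k ∙ v := by
  have hker : Module.finrank k (LinearMap.ker A.mulVecLin) = 1 := by
    have := LinearMap.finrank_range_add_finrank_ker A.mulVecLin
    rw [Module.finrank_fintype_fun_eq_card] at this
    change A.rank + _ = _ at this
    omega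
  obtain ⟨⟨v, hv⟩, hv0, hspan⟩ := finrank_eq_one_iff'.mp hker
  have hAv : A *ᵥ v = 0 := hv
  refine ⟨v, fun h => hv0 (Subtype.ext h), fun x => ⟨fun hx => ?_, fun hx => ?_⟩⟩
  · obtain ⟨c, hc⟩ := hspan ⟨x, hx⟩
    exact Submodule.mem_span_singleton.mpr ⟨c, congrArg Subtype.val hc⟩
  · obtain ⟨c, rfl⟩ := Submodule.mem_span_singleton.mp hx
    rw [mulVec_smul, hAv, smul_zero]

theorem exists_leftRadical_eq_span [DecidableEq n] (hq : q ≠ 0) :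
    ∃ w ≠ 0, ∀ x, x ∈ A.leftRadical q ↔ x ∈ k ∙ w := by
  obtain ⟨w, hw, h⟩ := Aᵀ.exists_ker_eq_span_of_rank_add_one (by rwa [rank_transpose])
  refine ⟨w, hw, fun x => ?_⟩
  rw [mem_leftRadical_iff hq, ← mulVec_transpose, h]

theorem exists_rightRadical_eq_span [DecidableEq n] [IsAlgClosed k] {p e : ℕ} [ExpChar k p] :
    ∃ u ≠ 0, ∀ y, y ∈ A.rightRadical (p ^ e) ↔ y ∈ k ∙ u := by
  have hq := expChar_pow_pos k p e
  obtain ⟨v, hv, h⟩ := A.exists_ker_eq_span_of_rank_add_one hA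
  choose u hu using fun i => IsAlgClosed.exists_pow_nat_eq (v i) hq
  replace hu : u ^ p ^ e = v := funext hu
  refine ⟨u, by rintro rfl; exact hv (by rw [← hu, zero_pow hq.ne']), fun y => ?_⟩
  rw [mem_rightRadical_iff, h, Submodule.mem_span_singleton, Submodule.mem_span_singleton, ← hu]
  constructor
  · rintro ⟨c, hc⟩
    obtain ⟨d, rfl⟩ := IsAlgClosed.exists_pow_nat_eq c hq
    refine ⟨d, funext fun i => iterateFrobenius_inj k p e ?_⟩
    simpa [iterateFrobenius_def, mul_pow] using congrFun hc i
  · rintro ⟨c, rfl⟩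
    exact ⟨c ^ p ^ e, (smul_pow ..).symm⟩

end RankTwo

end Matrix

section ProjIso
variable {A B : Matrix (Fin 3) (Fin 3) k}

theorem ProjIso.radicalsMeet_iff {p e : ℕ} [ExpChar k p] (h : ProjIso (p ^ e) A B) :
    A.RadicalsMeet (p ^ e) ↔ B.RadicalsMeet (p ^ e) := by
  obtain ⟨T, lam, hT, hlam, hB⟩ := h
  rw [← radicalsMeet_smul_iff hlam (A := B), ← hB,
    radicalsMeet_transpose_mul_mul_map_iff ((isUnit_iff_isUnit_det T).mpr hT)]

theorem ProjIso.radicalsPair_iff {p e : ℕ} [ExpChar k p] (h : ProjIso (p ^ e) A B) :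
    A.RadicalsPair (p ^ e) ↔ B.RadicalsPair (p ^ e) := by
  obtain ⟨T, lam, hT, hlam, hB⟩ := h
  rw [← radicalsPair_smul_iff hlam (A := B), ← hB,
    radicalsPair_transpose_mul_mul_map_iff ((isUnit_iff_isUnit_det T).mpr hT)]

theorem projIso_of_twistedGram {q : ℕ} {t : Fin 3 → Fin 3 → k} (ht : LinearIndependent k t)
    {lam : k} (hlam : lam ≠ 0) (h : A.twistedGram q t = lam • B) : ProjIso q A B := by
  refine ⟨(of t)ᵀ, lam, ?_, hlam, ?_⟩
  · rw [← isUnit_iff_isUnit_det, isUnit_transpose]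
    exact linearIndependent_rows_iff_isUnit.mp ht
  · rw [transpose_transpose, ← twistedGram_eq, h]

end ProjIso

section NormalForms
variable {q : ℕ} (hq : q ≠ 0) {x : Fin 3 → k}
include hq

theorem mem_leftRadical_X0 :
    x ∈ (!![0, 0, 0; 1, 0, 0; 0, 1, 0] : Matrix (Fin 3) (Fin 3) k).leftRadical q ↔
      x 1 = 0 ∧ x 2 = 0 := by
  simp [mem_leftRadical_iff hq, funext_iff, Fin.forall_fin_succ, vecHead, vecTail]

theorem mem_rightRadical_X0 :
    x ∈ (!![0, 0, 0; 1, 0, 0; 0, 1, 0] : Matrix (Fin 3) (Fin 3) k).rightRadical q ↔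
      x 0 = 0 ∧ x 1 = 0 := by
  simp [mem_rightRadical_iff, funext_iff, Fin.forall_fin_succ, vecHead, vecTail, hq]

theorem mem_leftRadical_X1 :
    x ∈ (!![1, 0, 0; 0, 0, 0; 0, 1, 0] : Matrix (Fin 3) (Fin 3) k).leftRadical q ↔
      x 0 = 0 ∧ x 2 = 0 := by
  simp [mem_leftRadical_iff hq, funext_iff, Fin.forall_fin_succ, vecHead, vecTail]

theorem mem_rightRadical_X1 :
    x ∈ (!![1, 0, 0; 0, 0, 0; 0, 1, 0] : Matrix (Fin 3) (Fin 3) k).rightRadical q ↔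
      x 0 = 0 ∧ x 1 = 0 := by
  simp [mem_rightRadical_iff, funext_iff, Fin.forall_fin_succ, vecHead, vecTail, hq]

theorem mem_leftRadical_X2 :
    x ∈ (!![1, 0, 0; 0, 1, 0; 0, 0, 0] : Matrix (Fin 3) (Fin 3) k).leftRadical q ↔
      x 0 = 0 ∧ x 1 = 0 := by
  simp [mem_leftRadical_iff hq, funext_iff, Fin.forall_fin_succ, vecHead, vecTail]

theorem mem_rightRadical_X2 :
    x ∈ (!![1, 0, 0; 0, 1, 0; 0, 0, 0] : Matrix (Fin 3) (Fin 3) k).rightRadical q ↔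
      x 0 = 0 ∧ x 1 = 0 := by
  simp [mem_rightRadical_iff, funext_iff, Fin.forall_fin_succ, vecHead, vecTail, hq]

theorem not_radicalsMeet_X0 :
    ¬(!![0, 0, 0; 1, 0, 0; 0, 1, 0] : Matrix (Fin 3) (Fin 3) k).RadicalsMeet q := by
  rintro ⟨x, hx, hL, hR⟩
  rw [mem_leftRadical_X0 hq] at hL
  rw [mem_rightRadical_X0 hq] at hR
  exact hx (funext <| Fin.forall_fin_succ.mpr ⟨hR.1, Fin.forall_fin_two.mpr ⟨hR.2, hL.2⟩⟩)

theorem not_radicalsMeet_X1 :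
    ¬(!![1, 0, 0; 0, 0, 0; 0, 1, 0] : Matrix (Fin 3) (Fin 3) k).RadicalsMeet q := by
  rintro ⟨x, hx, hL, hR⟩
  rw [mem_leftRadical_X1 hq] at hL
  rw [mem_rightRadical_X1 hq] at hR
  exact hx (funext <| Fin.forall_fin_succ.mpr ⟨hR.1, Fin.forall_fin_two.mpr ⟨hR.2, hL.2⟩⟩)

theorem radicalsMeet_X2 :
    (!![1, 0, 0; 0, 1, 0; 0, 0, 0] : Matrix (Fin 3) (Fin 3) k).RadicalsMeet q :=
  ⟨Pi.single 2 1, by simp, by simp [mem_leftRadical_X2 hq], by simp [mem_rightRadical_X2 hq]⟩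

theorem not_radicalsPair_X0 :
    ¬(!![0, 0, 0; 1, 0, 0; 0, 1, 0] : Matrix (Fin 3) (Fin 3) k).RadicalsPair q := by
  rintro ⟨x, hL, y, hR, hxy⟩
  rw [mem_leftRadical_X0 hq] at hL
  rw [mem_rightRadical_X0 hq] at hR
  simp [twistedForm, dotProduct, Fin.sum_univ_three, hL, hR, hq] at hxy

theorem radicalsPair_X1 :
    (!![1, 0, 0; 0, 0, 0; 0, 1, 0] : Matrix (Fin 3) (Fin 3) k).RadicalsPair q :=
  ⟨Pi.single 1 1, by simp [mem_leftRadical_X1 hq], Pi.single 2 1, by simp [mem_rightRadical_X1 hq],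
    by simp [twistedForm, vecHead, vecTail, hq]⟩

end NormalForms

section Roots
variable [IsAlgClosed k] {q : ℕ} (hq : 1 < q)
include hq

open Polynomial in
theorem exists_root_pow_succ {a b : k} (hab : a ≠ 0 ∨ b ≠ 0) (c d : k) :
    ∃ x, a * x ^ (q + 1) + b * x ^ q + c * x + d = 0 := by
  let f : k[X] := C a * X ^ (q + 1) + C b * X ^ q + C c * X + C d
  have hf : f.degree ≠ 0 := by
    intro hdeg
    have hC := eq_C_of_degree_eq_zero hdeg
    have ha := congrArg (coeff · (q + 1)) hC
    have hb := congrArg (coeff · q) hC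
    have hq0 : q ≠ 0 := by omega
    have hq1 : 1 ≠ q := by omega
    simp [f, coeff_X, coeff_C, coeff_X_pow, hq0, hq1] at ha hb
    exact hab.elim (· ha) (· hb)
  obtain ⟨x, hx⟩ := IsAlgClosed.exists_root f hf
  exact ⟨x, by simpa [f] using hx⟩

theorem exists_mul_eq_pow_mul {a b : k} (ha : a ≠ 0) (hb : b ≠ 0) :
    ∃ c ≠ 0, c * a = c ^ q * b := by
  obtain ⟨c, hc⟩ := IsAlgClosed.exists_pow_nat_eq (a / b) (by omega : 0 < q - 1)
  have hc0 : c ≠ 0 := by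
    rintro rfl
    simp [zero_pow (by omega : q - 1 ≠ 0)] at hc
    exact div_ne_zero ha hb hc.symm
  refine ⟨c, hc0, ?_⟩
  rw [← Nat.sub_add_cancel hq.le, pow_succ, hc]
  field_simp

end Roots

theorem Submodule.span_singleton_eq_of_mem {V : Type*} [AddCommGroup V] [Module k V] {x w : V}
    (hx : x ∈ k ∙ w) (hx0 : x ≠ 0) : k ∙ x = k ∙ w := by
  obtain ⟨c, rfl⟩ := Submodule.mem_span_singleton.mp hx
  exact Submodule.span_singleton_smul_eq (isUnit_iff_ne_zero.mpr (left_ne_zero_of_smul hx0)) w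

theorem exists_notMem_span_pair (a b : Fin 3 → k) : ∃ c, c ∉ Submodule.span k {a, b} := by
  by_contra! h
  have hle := finrank_range_le_card (R := k) ![a, b]
  rw [Set.finrank, Matrix.range_cons_cons_empty, Submodule.eq_top_iff'.mpr h, finrank_top,
    Module.finrank_fin_fun] at hle
  simp at hle

section Isotropic
variable {n : Type*} [Fintype n] {A : Matrix n n k} {p e : ℕ} [ExpChar k p]

local notation "⟪" x ", " y "⟫" => Matrix.twistedForm A (p ^ e) x y

theorem exists_twistedForm_ne_zero {a b : n → k} (ha : a ∉ A.rightRadical (p ^ e))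
    (hb : b ∉ A.leftRadical (p ^ e)) : ∃ s, ⟪s, a⟫ ≠ 0 ∧ ⟪b, s⟫ ≠ 0 := by
  simp only [rightRadical, leftRadical, Set.mem_ofPred_eq, not_forall] at ha hb
  obtain ⟨x, hx⟩ := ha
  obtain ⟨y, hy⟩ := hb
  by_cases hbx : ⟪b, x⟫ = 0
  · by_cases hya : ⟪y, a⟫ = 0
    · exact ⟨x + y, by simpa [hya] using hx, by simpa [hbx] using hy⟩
    · exact ⟨y, hya, hy⟩
  · exact ⟨x, hx, hbx⟩

variable [IsAlgClosed k] (hq : 1 < p ^ e)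
include hq

theorem exists_smul_add_isotropic {t s : n → k} (h : ⟪t, t⟫ ≠ 0 ∨ ⟪s, t⟫ ≠ 0) :
    ∃ y : k, ⟪y • t + s, y • t + s⟫ = 0 := by
  obtain ⟨y, hy⟩ := exists_root_pow_succ hq h ⟪t, s⟫ ⟪s, s⟫
  refine ⟨y, ?_⟩
  rw [twistedForm_smul_add_smul_add]
  linear_combination hy

theorem exists_isotropic_partner {a b s : n → k} (ha : ⟪a, a⟫ = 0) (hba : ⟪b, a⟫ = 0)
    (hsa : ⟪s, a⟫ ≠ 0) (hbs : ⟪b, s⟫ ≠ 0) :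
    ∃ s' μ, μ ≠ 0 ∧ ⟪s', s'⟫ = 0 ∧ ⟪s', a⟫ = μ ∧ ⟪b, s'⟫ = μ := by
  obtain ⟨c, hc, hcs⟩ := exists_mul_eq_pow_mul hq hsa hbs
  obtain ⟨y, hy⟩ := exists_smul_add_isotropic hq (t := a) (s := c • s)
    (Or.inr (by simpa using ⟨hc, hsa⟩))
  refine ⟨y • a + c • s, c * ⟪s, a⟫, mul_ne_zero hc hsa, hy, ?_, ?_⟩
  · simp [ha]
  · simp [hba, hcs]

end Isotropic

section Plane
variable {A : Matrix (Fin 3) (Fin 3) k} {p e : ℕ} [ExpChar k p] [IsAlgClosed k]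

local notation "⟪" x ", " y "⟫" => Matrix.twistedForm A (p ^ e) x y

theorem exists_ne_zero_twistedForm_eq_zero (u w : Fin 3 → k) :
    ∃ t ≠ 0, ⟪t, w⟫ = 0 ∧ ⟪u, t⟫ = 0 := by
  choose r hr using fun i => IsAlgClosed.exists_pow_nat_eq ((u ᵥ* A) i) (expChar_pow_pos k p e)
  replace hr : r ^ p ^ e = u ᵥ* A := funext hr
  have hdet : (of ![A *ᵥ w ^ p ^ e, r, 0]).det = 0 := det_eq_zero_of_row_eq_zero 2 fun _ => rfl
  obtain ⟨t, ht, hMt⟩ := exists_mulVec_eq_zero_iff.mpr hdet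
  have hrt : r ⬝ᵥ t = 0 := congrFun hMt 1
  refine ⟨t, ht, ?_, ?_⟩
  · rw [twistedForm, dotProduct_comm]
    exact congrFun hMt 0
  · rw [twistedForm, dotProduct_mulVec, ← hr, pow_dotProduct_pow, hrt,
      zero_pow (expChar_pow_pos k p e).ne']

theorem projIso_X1 {u w : Fin 3 → k} (hwL : w ∈ A.leftRadical (p ^ e))
    (hR : ∀ y, y ∈ A.rightRadical (p ^ e) ↔ y ∈ k ∙ u) (huw : ⟪u, w⟫ ≠ 0) :
    ProjIso (p ^ e) A !![1, 0, 0; 0, 0, 0; 0, 1, 0] := by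
  have hq0 : p ^ e ≠ 0 := (expChar_pow_pos k p e).ne'
  have huR : u ∈ A.rightRadical (p ^ e) := (hR u).mpr (Submodule.mem_span_singleton_self u)
  obtain ⟨t, ht, htw, hut⟩ := exists_ne_zero_twistedForm_eq_zero (A := A) (p := p) (e := e) u w
  -- `⟪t, t⟫ ≠ 0` is not known yet: it follows from this independence, since otherwise `t`
  -- would pair trivially with a basis and lie in the right radical `k ∙ u`.
  have hind : LinearIndependent k ![t, w, u] := by
    have hgram : A.twistedGram (p ^ e) ![t, w, u] = !![⟪t, t⟫, 0, 0; 0, 0, 0; 0, ⟪u, w⟫, 0] := by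
      ext i j
      fin_cases i <;> fin_cases j <;> simp [twistedGram, hwL _, huR _, htw, hut]
    refine linearIndependent_of_twistedGram hgram 0 ht fun c hL hR' i hi => ?_
    rw [mem_leftRadical_iff hq0] at hL
    rw [mem_rightRadical_iff] at hR'
    fin_cases i <;> simp_all [funext_iff, Fin.forall_fin_succ, vecHead, vecTail]
  have htt : ⟪t, t⟫ ≠ 0 := by
    intro htt
    have htR : t ∈ A.rightRadical (p ^ e) := mem_rightRadical_of_linearIndependent hind
      (Fin.forall_fin_succ.mpr ⟨htt, Fin.forall_fin_two.mpr ⟨hwL t, hut⟩⟩)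
    obtain ⟨c, rfl⟩ := Submodule.mem_span_singleton.mp ((hR t).mp htR)
    simp [huw] at htw
    simp [htw] at ht
  have hu : (⟪t, t⟫ / ⟪u, w⟫) • u ≠ 0 :=
    smul_ne_zero (div_ne_zero htt huw) (by rintro rfl; simp [twistedForm] at huw)
  have hgram : A.twistedGram (p ^ e) ![t, w, (⟪t, t⟫ / ⟪u, w⟫) • u] =
      ⟪t, t⟫ • !![1, 0, 0; 0, 0, 0; 0, 1, 0] := by
    ext i j
    fin_cases i <;> fin_cases j <;> simp [twistedGram, hwL _, huR _, htw, hut, huw]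
  refine projIso_of_twistedGram
    (linearIndependent_of_twistedGram hgram 2 hu fun c hL hR i _ => ?_) htt hgram
  rw [leftRadical_smul htt] at hL
  rw [rightRadical_smul htt] at hR
  rw [eq_zero_of_not_radicalsMeet (not_radicalsMeet_X1 hq0) hL hR, Pi.zero_apply]

variable (hq : 1 < p ^ e)
include hq

theorem exists_isotropic_notMem_span (u : Fin 3 → k) : ∃ t, ⟪t, t⟫ = 0 ∧ t ∉ k ∙ u := by
  obtain ⟨a, ha⟩ := exists_notMem_span_pair u u
  rw [Set.pair_eq_singleton] at ha
  by_cases haa : ⟪a, a⟫ = 0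
  · exact ⟨a, haa, ha⟩
  obtain ⟨b, hb⟩ := exists_notMem_span_pair a u
  obtain ⟨y, hy⟩ := exists_smul_add_isotropic hq (t := a) (s := b) (Or.inl haa)
  refine ⟨y • a + b, hy, fun hmem => hb ?_⟩
  obtain ⟨c, hc⟩ := Submodule.mem_span_singleton.mp hmem
  exact Submodule.mem_span_pair.mpr ⟨-y, c, by rw [hc]; module⟩

theorem projIso_X0 {u w : Fin 3 → k} (hwL : w ∈ A.leftRadical (p ^ e))
    (huR : u ∈ A.rightRadical (p ^ e)) (hwR : w ∉ A.rightRadical (p ^ e))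
    (huL : u ∉ A.leftRadical (p ^ e)) (huw : ⟪u, w⟫ = 0) :
    ProjIso (p ^ e) A !![0, 0, 0; 1, 0, 0; 0, 1, 0] := by
  obtain ⟨s, hsw, hus⟩ := exists_twistedForm_ne_zero hwR huL
  obtain ⟨t, μ, hμ, htt, htw, hut⟩ := exists_isotropic_partner hq (hwL w) huw hsw hus
  have hgram : A.twistedGram (p ^ e) ![w, t, u] = μ • !![0, 0, 0; 1, 0, 0; 0, 1, 0] := by
    ext i j
    fin_cases i <;> fin_cases j <;> simp [twistedGram, hwL _, huR _, htt, htw, hut, huw]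
  have hu : u ≠ 0 := by rintro rfl; exact huL fun y => by simp [twistedForm]
  refine projIso_of_twistedGram
    (linearIndependent_of_twistedGram hgram 2 hu fun c hL hR i _ => ?_) hμ hgram
  rw [leftRadical_smul hμ] at hL
  rw [rightRadical_smul hμ] at hR
  rw [eq_zero_of_not_radicalsMeet (not_radicalsMeet_X0 (expChar_pow_pos k p e).ne') hL hR,
    Pi.zero_apply]

theorem projIso_X2_of_hyperbolic {t s u : Fin 3 → k} {μ : k} (hμ : μ ≠ 0) (hu : u ≠ 0)
    (huL : u ∈ A.leftRadical (p ^ e)) (huR : u ∈ A.rightRadical (p ^ e))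
    (htt : ⟪t, t⟫ = 0) (hss : ⟪s, s⟫ = 0) (hts : ⟪t, s⟫ = μ) (hst : ⟪s, t⟫ = μ) :
    ProjIso (p ^ e) A !![1, 0, 0; 0, 1, 0; 0, 0, 0] := by
  have hq0 : p ^ e ≠ 0 := by omega
  obtain ⟨x, hx⟩ := exists_root_pow_succ hq (a := (0 : k)) (b := 1) (Or.inr one_ne_zero) 1 (-1)
  obtain ⟨β, hβ⟩ := IsAlgClosed.exists_pow_nat_eq (-1 : k) (Nat.succ_pos (p ^ e))
  rw [pow_succ'] at hβ
  have hx1 : (x - 1) ^ p ^ e = x ^ p ^ e - 1 := by rw [sub_pow_expChar_pow, one_pow]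
  have hform : ∀ a b : k, ⟪a • t + s, b • t + s⟫ = μ * (a + b ^ p ^ e) := by
    intro a b
    rw [twistedForm_smul_add_smul_add, htt, hts, hst, hss]
    ring
  have h00 : ⟪x • t + s, x • t + s⟫ = μ := by
    rw [hform]; linear_combination μ * hx
  have h01 : ⟪x • t + s, β • ((x - 1) • t + s)⟫ = 0 := by
    rw [twistedForm_smul_right, hform, hx1]; linear_combination β ^ p ^ e * μ * hx
  have h10 : ⟪β • ((x - 1) • t + s), x • t + s⟫ = 0 := by
    rw [twistedForm_smul_left, hform]; linear_combination β * μ * hx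
  have h11 : ⟪β • ((x - 1) • t + s), β • ((x - 1) • t + s)⟫ = μ := by
    rw [twistedForm_smul_left, twistedForm_smul_right, hform, hx1]
    linear_combination μ * (x + x ^ p ^ e - 2) * hβ - μ * hx
  generalize x • t + s = φ at h00 h01 h10 h11
  generalize β • ((x - 1) • t + s) = ψ at h01 h10 h11
  have hgram : A.twistedGram (p ^ e) ![φ, ψ, u] = μ • !![1, 0, 0; 0, 1, 0; 0, 0, 0] := by
    ext i j
    fin_cases i <;> fin_cases j <;> simp [twistedGram, huL _, huR _, h00, h01, h10, h11]
  refine projIso_of_twistedGram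
    (linearIndependent_of_twistedGram hgram 2 hu fun c hL _ i hi => ?_) hμ hgram
  rw [leftRadical_smul hμ, mem_leftRadical_X2 hq0] at hL
  fin_cases i <;> simp_all

theorem projIso_X2 {u : Fin 3 → k} (hu : u ≠ 0)
    (hL : ∀ x, x ∈ A.leftRadical (p ^ e) ↔ x ∈ k ∙ u)
    (hR : ∀ y, y ∈ A.rightRadical (p ^ e) ↔ y ∈ k ∙ u) :
    ProjIso (p ^ e) A !![1, 0, 0; 0, 1, 0; 0, 0, 0] := by
  obtain ⟨t, htt, htu⟩ := exists_isotropic_notMem_span hq u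
  obtain ⟨s, hst, hts⟩ := exists_twistedForm_ne_zero (mt (hR t).mp htu) (mt (hL t).mp htu)
  obtain ⟨s', μ, hμ, hss, hst', hts'⟩ := exists_isotropic_partner hq htt htt hst hts
  exact projIso_X2_of_hyperbolic hq hμ hu ((hL u).mpr (Submodule.mem_span_singleton_self u))
    ((hR u).mpr (Submodule.mem_span_singleton_self u)) htt hss hts' hst'

theorem projIso_X0_or_X1_or_X2 (hA : A.rank = 2) :
    ProjIso (p ^ e) A !![0, 0, 0; 1, 0, 0; 0, 1, 0] ∨
      ProjIso (p ^ e) A !![1, 0, 0; 0, 0, 0; 0, 1, 0] ∨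
        ProjIso (p ^ e) A !![1, 0, 0; 0, 1, 0; 0, 0, 0] := by
  have hA' : A.rank + 1 = Fintype.card (Fin 3) := by simp [hA]
  obtain ⟨w, hw, hL⟩ := exists_leftRadical_eq_span hA' (expChar_pow_pos k p e).ne'
  obtain ⟨u, hu, hR⟩ := exists_rightRadical_eq_span hA' (p := p) (e := e)
  have hwL := (hL w).mpr (Submodule.mem_span_singleton_self w)
  have huR := (hR u).mpr (Submodule.mem_span_singleton_self u)
  by_cases hmeet : A.RadicalsMeet (p ^ e)
  · obtain ⟨x, hx, hxL, hxR⟩ := hmeet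
    refine Or.inr (Or.inr (projIso_X2 hq hx (fun y => ?_) (fun y => ?_)))
    · rw [hL, Submodule.span_singleton_eq_of_mem ((hL x).mp hxL) hx]
    · rw [hR, Submodule.span_singleton_eq_of_mem ((hR x).mp hxR) hx]
  have huL : u ∉ A.leftRadical (p ^ e) := fun huL => hmeet ⟨u, hu, huL, huR⟩
  have hwR : w ∉ A.rightRadical (p ^ e) := fun hwR => hmeet ⟨w, hw, hwL, hwR⟩
  by_cases huw : A.twistedForm (p ^ e) u w = 0
  · exact Or.inl (projIso_X0 hq hwL huR hwR huL huw)
  · exact Or.inr (Or.inl (projIso_X1 hwL hR huw))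

end Plane

end

/-- Theorem 5(ii): a plane curve `X_A` with `rank A = 2` is projectively isomorphic to
exactly one of `X₀ : x₀^q x₁ + x₁^q x₂ = 0`, `X₁ : x₀^{q+1} + x₁^q x₂ = 0`,
`X₂ : x₀^{q+1} + x₁^{q+1} = 0`. -/
theorem rank_two_plane_curve (p q e : ℕ) (hp : p.Prime) (he : 0 < e) (hq : q = p ^ e)
    (k : Type*) [Field k] [IsAlgClosed k] [CharP k p]
    (A : Matrix (Fin 3) (Fin 3) k) (hA : A.rank = 2) :
    let X0 : Matrix (Fin 3) (Fin 3) k := !![0, 0, 0; 1, 0, 0; 0, 1, 0]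
    let X1 : Matrix (Fin 3) (Fin 3) k := !![1, 0, 0; 0, 0, 0; 0, 1, 0]
    let X2 : Matrix (Fin 3) (Fin 3) k := !![1, 0, 0; 0, 1, 0; 0, 0, 0]
    (ProjIso q A X0 ∨ ProjIso q A X1 ∨ ProjIso q A X2) ∧
      ¬(ProjIso q A X0 ∧ ProjIso q A X1) ∧
      ¬(ProjIso q A X0 ∧ ProjIso q A X2) ∧
      ¬(ProjIso q A X1 ∧ ProjIso q A X2) := by
  intro X0 X1 X2
  subst hq
  have : Fact p.Prime := ⟨hp⟩
  have hq1 : 1 < p ^ e := Nat.one_lt_pow he.ne' hp.one_lt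
  have hq0 : p ^ e ≠ 0 := by omega
  refine ⟨projIso_X0_or_X1_or_X2 hq1 hA, fun ⟨h0, h1⟩ => ?_, fun ⟨h0, h2⟩ => ?_,
    fun ⟨h1, h2⟩ => ?_⟩
  · exact not_radicalsPair_X0 hq0
      ((h0.radicalsPair_iff.symm.trans h1.radicalsPair_iff).mpr (radicalsPair_X1 hq0))
  · exact not_radicalsMeet_X0 hq0
      ((h0.radicalsMeet_iff.symm.trans h2.radicalsMeet_iff).mpr (radicalsMeet_X2 hq0))
  · exact not_radicalsMeet_X1 hq0
      ((h1.radicalsMeet_iff.symm.trans h2.radicalsMeet_iff).mpr (radicalsMeet_X2 hq0))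
end
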